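/- arXiv:1606.06486 — 7 statements merged into one kernel-verified Lean document; each statement's English description precedes it below -/
import Mathlib

section
/- Let n ≥ 3 and let V denote ℍ^{n+1} regarded as a real vector space of dimension 4(n+1). If α : V × V × V → ℝ is ℝ-trilinear and satisfies α(g v₁, g v₂, g v₃) = α(v₁, v₂, v₃) for all g ∈ SO⁰(1,n) and all v₁, v₂, v₃ ∈ V, then α = 0. -/
/- Statement 2: SO⁰(1,n)-invariant trilinear forms on ℍ^{n+1} vanish for n ≥ 3. -/

open Quaternion Matrix

noncomputable section

/-- The quaternions over ℝ. -/
abbrev Quat := Quaternion ℝ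

/-- The real matrix η = diag(-1,1,…,1). -/
def etaR (n : ℕ) : Matrix (Fin (n + 1)) (Fin (n + 1)) ℝ :=
  Matrix.diagonal fun i => if i = 0 then -1 else 1

/-- SO⁰(1,n): the identity component of the real pseudo-orthogonal group O(1,n),
regarded as quaternionic matrices via the inclusion ℝ ⊂ ℍ. -/
def SOo (n : ℕ) : Set (Matrix (Fin (n + 1)) (Fin (n + 1)) Quat) :=
  (fun g : Matrix (Fin (n + 1)) (Fin (n + 1)) ℝ => g.map (algebraMap ℝ Quat)) ''
    connectedComponentIn {g : Matrix (Fin (n + 1)) (Fin (n + 1)) ℝ | gᵀ * etaR n * g = etaR n} 1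

def wfun (n : ℕ) : Fin (n + 1) → ℝ := fun k => if k = 0 then -1 else 1

lemma etaR_eq (n : ℕ) : etaR n = Matrix.diagonal (wfun n) := rfl

/-- Matrix which is the identity outside the (i,j) plane. -/
def plM {m : ℕ} (i j : Fin m) (a b c d : ℝ) : Matrix (Fin m) (Fin m) ℝ :=
  Matrix.of fun k l =>
    if k = i then (if l = i then a else if l = j then b else 0)
    else if k = j then (if l = i then c else if l = j then d else 0)
    else if l = k then 1 else 0

section entries
variable {m : ℕ} {i j : Fin m} {a b c d : ℝ}

lemma plM_ii : plM i j a b c d i i = a := by simp [plM]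
lemma plM_ij (hij : i ≠ j) : plM i j a b c d i j = b := by simp [plM, Ne.symm hij]
lemma plM_ji (hij : i ≠ j) : plM i j a b c d j i = c := by simp [plM, Ne.symm hij]
lemma plM_jj (hij : i ≠ j) : plM i j a b c d j j = d := by simp [plM, Ne.symm hij]
lemma plM_i_other {l : Fin m} (h1 : l ≠ i) (h2 : l ≠ j) : plM i j a b c d i l = 0 := by
  simp [plM, h1, h2]
lemma plM_j_other (hij : i ≠ j) {l : Fin m} (h1 : l ≠ i) (h2 : l ≠ j) :
    plM i j a b c d j l = 0 := by
  simp [plM, Ne.symm hij, h1, h2]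
lemma plM_other {k l : Fin m} (h1 : k ≠ i) (h2 : k ≠ j) :
    plM i j a b c d k l = if l = k then 1 else 0 := by
  simp [plM, h1, h2]
end entries

lemma plM_eta {n : ℕ} {i j : Fin (n + 1)} (hij : i ≠ j) (a b c d : ℝ)
    (h1 : wfun n i * (a * a) + wfun n j * (c * c) = wfun n i)
    (h2 : wfun n i * (a * b) + wfun n j * (c * d) = 0)
    (h3 : wfun n i * (b * b) + wfun n j * (d * d) = wfun n j) :
    (plM i j a b c d)ᵀ * etaR n * plM i j a b c d = etaR n := by
  have hji := Ne.symm hij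
  ext k l
  rw [Matrix.mul_assoc, Matrix.mul_apply]
  have hentry : ∀ x, (etaR n * plM i j a b c d) x l = wfun n x * plM i j a b c d x l := by
    intro x
    rw [etaR_eq, Matrix.diagonal_mul]
  simp_rw [Matrix.transpose_apply, hentry]
  have hsummand : ∀ x : Fin (n+1),
      plM i j a b c d x k * (wfun n x * plM i j a b c d x l)
        = (if x = i then plM i j a b c d i k * (wfun n i * plM i j a b c d i l) else 0)
          + (if x = j then plM i j a b c d j k * (wfun n j * plM i j a b c d j l) else 0)
          + (if x = k then (if k = i ∨ k = j then 0 else if l = k then wfun n k else 0) else 0) := by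
    intro x
    by_cases hxi : x = i
    · rw [hxi, if_pos rfl, if_neg hij]
      have h3rd : (if i = k then (if k = i ∨ k = j then (0:ℝ) else if l = k then wfun n k else 0)
          else 0) = 0 := by
        by_cases h : i = k
        · rw [if_pos h, if_pos (Or.inl h.symm)]
        · rw [if_neg h]
      rw [h3rd]; ring
    · by_cases hxj : x = j
      · rw [hxj, if_neg hji, if_pos rfl]
        have h3rd : (if j = k then (if k = i ∨ k = j then (0:ℝ) else if l = k then wfun n k else 0)
            else 0) = 0 := by
          by_cases h : j = k
          · rw [if_pos h, if_pos (Or.inr h.symm)]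
          · rw [if_neg h]
        rw [h3rd]; ring
      · rw [if_neg hxi, if_neg hxj, plM_other hxi hxj, plM_other hxi hxj]
        by_cases hxk : x = k
        · have hk : ¬(k = i ∨ k = j) := by
            rintro (h | h)
            · exact hxi (hxk.trans h)
            · exact hxj (hxk.trans h)
          rw [if_pos hxk, if_neg hk, if_pos hxk.symm, hxk, one_mul, zero_add, zero_add]
          by_cases hlk : l = k <;> simp [hlk]
        · rw [if_neg hxk, if_neg (fun h : k = x => hxk h.symm), zero_mul]
          ring
  rw [Finset.sum_congr rfl (fun x _ => hsummand x)]
  rw [Finset.sum_add_distrib, Finset.sum_add_distrib,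
    Finset.sum_ite_eq' Finset.univ, Finset.sum_ite_eq' Finset.univ,
    Finset.sum_ite_eq' Finset.univ]
  simp only [Finset.mem_univ, if_pos]
  rw [etaR_eq, Matrix.diagonal_apply]
  by_cases hki : k = i
  · rw [hki, if_pos (Or.inl rfl), add_zero, plM_ii, plM_ji hij]
    by_cases hli : l = i
    · rw [hli, plM_ii, plM_ji hij, if_pos rfl]
      nlinarith [h1]
    · by_cases hlj : l = j
      · rw [hlj, plM_ij hij, plM_jj hij, if_neg hij]
        nlinarith [h2]
      · rw [plM_i_other hli hlj, plM_j_other hij hli hlj,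
          if_neg (fun h : i = l => hli h.symm)]
        ring
  · by_cases hkj : k = j
    · rw [hkj, if_pos (Or.inr rfl), add_zero, plM_ij hij, plM_jj hij]
      by_cases hli : l = i
      · rw [hli, plM_ii, plM_ji hij, if_neg hji]
        nlinarith [h2]
      · by_cases hlj : l = j
        · rw [hlj, plM_ij hij, plM_jj hij, if_pos rfl]
          nlinarith [h3]
        · rw [plM_i_other hli hlj, plM_j_other hij hli hlj,
            if_neg (fun h : j = l => hlj h.symm)]
          ring
    · rw [if_neg (by rintro (h | h); exacts [hki h, hkj h]),
        plM_i_other hki hkj, plM_j_other hij hki hkj]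
      by_cases hlk : l = k
      · rw [if_pos hlk, hlk, if_pos rfl]
        ring
      · rw [if_neg hlk, if_neg (fun h : k = l => hlk h.symm)]
        ring

lemma sum_pair {M : Type*} [AddCommMonoid M] {m : ℕ} {i j : Fin m} (hij : i ≠ j) (X Y : M) :
    ∑ l, (if l = i then X else if l = j then Y else 0) = X + Y := by
  have h : ∀ l : Fin m, (if l = i then X else if l = j then Y else 0)
      = (if l = i then X else 0) + (if l = j then Y else 0) := by
    intro l
    split_ifs with h1 h2 <;> simp_all
  simp_rw [h, Finset.sum_add_distrib, Finset.sum_ite_eq' Finset.univ, Finset.mem_univ,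
    if_pos]

lemma plM_mulVec {m : ℕ} {i j : Fin m} (hij : i ≠ j) (a b c d : ℝ) (v : Fin m → Quat) :
    ((plM i j a b c d).map (algebraMap ℝ Quat)).mulVec v =
      fun k => if k = i then algebraMap ℝ Quat a * v i + algebraMap ℝ Quat b * v j
        else if k = j then algebraMap ℝ Quat c * v i + algebraMap ℝ Quat d * v j
        else v k := by
  funext k
  rw [Matrix.mulVec]
  show ∑ l, (algebraMap ℝ Quat) (plM i j a b c d k l) * v l = _
  by_cases hki : k = i
  · rw [hki, if_pos rfl]
    have h : ∀ l, (algebraMap ℝ Quat) (plM i j a b c d i l) * v l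
        = (if l = i then algebraMap ℝ Quat a * v i else
            if l = j then algebraMap ℝ Quat b * v j else 0) := by
      intro l
      by_cases h1 : l = i
      · rw [h1, plM_ii, if_pos rfl]
      · by_cases h2 : l = j
        · rw [h2, plM_ij hij, if_neg (fun h : j = i => hij h.symm), if_pos rfl]
        · rw [plM_i_other h1 h2, map_zero, zero_mul, if_neg h1, if_neg h2]
    rw [Finset.sum_congr rfl (fun l _ => h l), sum_pair hij]
  · by_cases hkj : k = j
    · rw [hkj, if_neg (Ne.symm hij), if_pos rfl]
      have h : ∀ l, (algebraMap ℝ Quat) (plM i j a b c d j l) * v l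
          = (if l = i then algebraMap ℝ Quat c * v i else
              if l = j then algebraMap ℝ Quat d * v j else 0) := by
        intro l
        by_cases h1 : l = i
        · rw [h1, plM_ji hij, if_pos rfl]
        · by_cases h2 : l = j
          · rw [h2, plM_jj hij, if_neg (fun h : j = i => hij h.symm), if_pos rfl]
          · rw [plM_j_other hij h1 h2, map_zero, zero_mul, if_neg h1, if_neg h2]
      rw [Finset.sum_congr rfl (fun l _ => h l), sum_pair hij]
    · rw [if_neg hki, if_neg hkj]
      have h : ∀ l, (algebraMap ℝ Quat) (plM i j a b c d k l) * v l
          = (if l = k then v l else 0) := by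
        intro l
        rw [plM_other hki hkj]
        by_cases h1 : l = k
        · rw [if_pos h1, if_pos h1, _root_.map_one, one_mul]
        · rw [if_neg h1, if_neg h1, map_zero, zero_mul]
      rw [Finset.sum_congr rfl (fun l _ => h l), Finset.sum_ite_eq' Finset.univ k v]
      simp

lemma path_mem {m : ℕ} {s : Set (Matrix (Fin m) (Fin m) ℝ)}
    (γ : ℝ → Matrix (Fin m) (Fin m) ℝ) (hγ : Continuous γ) (h0 : γ 0 = 1)
    (hs : ∀ t, γ t ∈ s) (t : ℝ) : γ t ∈ connectedComponentIn s 1 := by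
  have hconn : IsPreconnected (Set.range γ) := (isConnected_range hγ).isPreconnected
  exact hconn.subset_connectedComponentIn ⟨0, h0⟩ (Set.range_subset_iff.2 hs) ⟨t, rfl⟩

lemma plM_one {m : ℕ} {i j : Fin m} (hij : i ≠ j) : plM i j 1 0 0 1 = 1 := by
  have hji := Ne.symm hij
  ext k l
  rw [Matrix.one_apply]
  by_cases hki : k = i
  · rw [hki]
    by_cases h1 : l = i
    · rw [h1, plM_ii, if_pos rfl]
    · by_cases h2 : l = j
      · rw [h2, plM_ij hij, if_neg hij]
      · rw [plM_i_other h1 h2, if_neg (fun h : i = l => h1 h.symm)]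
  · by_cases hkj : k = j
    · rw [hkj]
      by_cases h1 : l = i
      · rw [h1, plM_ji hij, if_neg hji]
      · by_cases h2 : l = j
        · rw [h2, plM_jj hij, if_pos rfl]
        · rw [plM_j_other hij h1 h2, if_neg (fun h : j = l => h2 h.symm)]
    · rw [plM_other hki hkj]
      by_cases h1 : l = k
      · rw [if_pos h1, if_pos h1.symm]
      · rw [if_neg h1, if_neg (fun h : k = l => h1 h.symm)]

lemma plM_continuous {m : ℕ} (i j : Fin m) (f₁ f₂ f₃ f₄ : ℝ → ℝ)
    (h₁ : Continuous f₁) (h₂ : Continuous f₂) (h₃ : Continuous f₃) (h₄ : Continuous f₄) :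
    Continuous fun t => plM i j (f₁ t) (f₂ t) (f₃ t) (f₄ t) := by
  apply continuous_matrix
  intro k l
  simp only [plM, Matrix.of_apply]
  split_ifs <;> fun_prop

lemma flipM_mem {n : ℕ} {i j : Fin (n + 1)} (hij : i ≠ j) (hi : i ≠ 0) (hj : j ≠ 0) :
    ((plM i j (-1) 0 0 (-1)).map (algebraMap ℝ Quat)) ∈ SOo n := by
  refine ⟨_, ?_, rfl⟩
  have h := path_mem (s := {g | gᵀ * etaR n * g = etaR n})
    (fun θ => plM i j (Real.cos θ) (-Real.sin θ) (Real.sin θ) (Real.cos θ))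
    (plM_continuous i j _ _ _ _ (by fun_prop) (by fun_prop) (by fun_prop) (by fun_prop))
    (by simp only [Real.cos_zero, Real.sin_zero, neg_zero]; exact plM_one hij)
    (fun t => by
      show _ = _
      refine plM_eta hij _ _ _ _ ?_ ?_ ?_ <;>
        simp only [wfun, if_neg hi, if_neg hj] <;>
        nlinarith [Real.sin_sq_add_cos_sq t])
    Real.pi
  simpa [Real.cos_pi, Real.sin_pi] using h

lemma boostM_mem {n : ℕ} (h10 : (1 : Fin (n + 1)) ≠ 0) :
    ((plM (0 : Fin (n + 1)) 1 (Real.cosh 1) (Real.sinh 1) (Real.sinh 1)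
      (Real.cosh 1)).map (algebraMap ℝ Quat)) ∈ SOo n := by
  have h01 : (0 : Fin (n + 1)) ≠ 1 := Ne.symm h10
  refine ⟨_, ?_, rfl⟩
  exact path_mem (s := {g | gᵀ * etaR n * g = etaR n})
    (fun t => plM (0 : Fin (n + 1)) 1 (Real.cosh t) (Real.sinh t) (Real.sinh t) (Real.cosh t))
    (plM_continuous _ _ _ _ _ _ (by fun_prop) (by fun_prop) (by fun_prop) (by fun_prop))
    (by simp only [Real.cosh_zero, Real.sinh_zero]; exact plM_one h01)
    (fun t => by
      show _ = _
      refine plM_eta h01 _ _ _ _ ?_ ?_ ?_ <;>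
        simp only [wfun, if_pos rfl, if_neg h10, if_true] <;>
        nlinarith [Real.cosh_sq_sub_sinh_sq t])
    1

/-! ### Actions on vectors -/

def uvv {n : ℕ} (s : ℝ) (q : Quat) : Fin (n+1) → Quat :=
  fun k => if k = 0 then q else if k = 1 then s • q else 0

def bvv {n : ℕ} (v : Fin (n+1) → Quat) : Fin (n+1) → Quat := fun k =>
  if k = 0 then Real.cosh 1 • v 0 + Real.sinh 1 • v 1
  else if k = 1 then Real.sinh 1 • v 0 + Real.cosh 1 • v 1 else v k

def flv {n : ℕ} (i j : Fin (n+1)) (v : Fin (n+1) → Quat) : Fin (n+1) → Quat := fun k =>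
  if k = i then -v i else if k = j then -v j else v k

lemma uvv_zero {n : ℕ} (s : ℝ) (q : Quat) : uvv (n := n) s q 0 = q := by simp [uvv]
lemma uvv_one {n : ℕ} (h10 : (1 : Fin (n+1)) ≠ 0) (s : ℝ) (q : Quat) :
    uvv (n := n) s q 1 = s • q := by simp [uvv, h10]
lemma uvv_other {n : ℕ} {k : Fin (n+1)} (hk0 : k ≠ 0) (hk1 : k ≠ 1) (s : ℝ) (q : Quat) :
    uvv (n := n) s q k = 0 := by simp [uvv, hk0, hk1]

lemma bvv_zero {n : ℕ} (v : Fin (n+1) → Quat) :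
    bvv v 0 = Real.cosh 1 • v 0 + Real.sinh 1 • v 1 := by simp [bvv]
lemma bvv_one {n : ℕ} (h10 : (1 : Fin (n+1)) ≠ 0) (v : Fin (n+1) → Quat) :
    bvv v 1 = Real.sinh 1 • v 0 + Real.cosh 1 • v 1 := by simp [bvv, h10]
lemma bvv_other {n : ℕ} {k : Fin (n+1)} (hk0 : k ≠ 0) (hk1 : k ≠ 1) (v : Fin (n+1) → Quat) :
    bvv v k = v k := by simp [bvv, hk0, hk1]

lemma flv_i {n : ℕ} {i j : Fin (n+1)} (v : Fin (n+1) → Quat) : flv i j v i = -v i := by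
  simp [flv]
lemma flv_j {n : ℕ} {i j : Fin (n+1)} (hij : i ≠ j) (v : Fin (n+1) → Quat) :
    flv i j v j = -v j := by simp [flv, Ne.symm hij]
lemma flv_other {n : ℕ} {i j k : Fin (n+1)} (hki : k ≠ i) (hkj : k ≠ j)
    (v : Fin (n+1) → Quat) : flv i j v k = v k := by simp [flv, hki, hkj]

lemma mulVec_flip {n : ℕ} {i j : Fin (n+1)} (hij : i ≠ j) (v : Fin (n+1) → Quat) :
    ((plM i j (-1) 0 0 (-1)).map (algebraMap ℝ Quat)).mulVec v = flv i j v := by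
  rw [plM_mulVec hij]
  funext k
  simp only [flv, map_neg, _root_.map_one, map_zero, neg_mul, one_mul, zero_mul, add_zero,
    zero_add]

lemma mulVec_boost {n : ℕ} (h01 : (0 : Fin (n+1)) ≠ 1) (v : Fin (n+1) → Quat) :
    ((plM (0 : Fin (n+1)) 1 (Real.cosh 1) (Real.sinh 1) (Real.sinh 1)
      (Real.cosh 1)).map (algebraMap ℝ Quat)).mulVec v = bvv v := by
  rw [plM_mulVec h01]
  funext k
  simp only [bvv, Algebra.smul_def]

/-! ### Eigenvector facts -/

lemma bvv_uvv {n : ℕ} (h10 : (1 : Fin (n+1)) ≠ 0) {s : ℝ} (hs : s = 1 ∨ s = -1) (q : Quat) :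
    bvv (uvv (n := n) s q) = Real.exp s • uvv s q := by
  have hcs : Real.cosh 1 + Real.sinh 1 * s = Real.exp s := by
    rcases hs with h | h <;> rw [h]
    · rw [mul_one]; exact Real.cosh_add_sinh 1
    · rw [mul_neg_one]
      linarith [Real.cosh_sub_sinh 1]
  have hsc : Real.sinh 1 + Real.cosh 1 * s = Real.exp s * s := by
    rcases hs with h | h <;> rw [h]
    · rw [mul_one, mul_one]
      linarith [Real.cosh_add_sinh 1]
    · rw [mul_neg_one, mul_neg_one]
      linarith [Real.cosh_sub_sinh 1]
  funext k
  rw [Pi.smul_apply]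
  by_cases hk0 : k = 0
  · rw [hk0, bvv_zero]
    simp only [uvv_zero, uvv_one h10]
    rw [smul_smul, ← add_smul, hcs]
  · by_cases hk1 : k = 1
    · rw [hk1, bvv_one h10]
      simp only [uvv_zero, uvv_one h10]
      rw [smul_smul, smul_smul, ← add_smul, hsc]
    · rw [bvv_other hk0 hk1]
      simp only [uvv_other hk0 hk1, smul_zero]

lemma bvv_single {n : ℕ} {j : Fin (n+1)} (h10 : (1 : Fin (n+1)) ≠ 0)
    (hj0 : j ≠ 0) (hj1 : j ≠ 1) (q : Quat) :
    bvv (Pi.single j q) = Pi.single j q := by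
  funext k
  by_cases hk0 : k = 0
  · rw [hk0, bvv_zero]
    simp only [Pi.single_eq_of_ne (Ne.symm hj0), Pi.single_eq_of_ne (Ne.symm hj1),
      smul_zero, add_zero]
  · by_cases hk1 : k = 1
    · rw [hk1, bvv_one h10]
      simp only [Pi.single_eq_of_ne (Ne.symm hj0), Pi.single_eq_of_ne (Ne.symm hj1),
        smul_zero, add_zero]
    · rw [bvv_other hk0 hk1]

lemma flv_uvv {n : ℕ} {i j : Fin (n+1)} (hi0 : i ≠ 0) (hi1 : i ≠ 1) (hj0 : j ≠ 0)
    (hj1 : j ≠ 1) (s : ℝ) (q : Quat) : flv i j (uvv (n := n) s q) = uvv s q := by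
  funext k
  by_cases hki : k = i
  · rw [hki, flv_i]
    simp only [uvv_other hi0 hi1, neg_zero]
  · by_cases hkj : k = j
    · rw [hkj]
      by_cases hij : i = j
      · rw [← hij, flv_i]
        simp only [uvv_other hi0 hi1, neg_zero]
      · rw [flv_j hij]
        simp only [uvv_other hj0 hj1, neg_zero]
    · rw [flv_other hki hkj]

lemma flv_single_i {n : ℕ} {i j : Fin (n+1)} (q : Quat) :
    flv i j (Pi.single i q) = -Pi.single i q := by
  funext k
  rw [Pi.neg_apply]
  by_cases hki : k = i
  · rw [hki, flv_i]
  · by_cases hkj : k = j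
    · rw [hkj]
      by_cases hij : i = j
      · rw [← hij, flv_i]
      · rw [flv_j hij]
    · rw [flv_other hki hkj]
      simp only [Pi.single_eq_of_ne hki, neg_zero]

lemma flv_single_j {n : ℕ} {i j : Fin (n+1)} (hij : i ≠ j) (q : Quat) :
    flv i j (Pi.single j q) = -Pi.single j q := by
  funext k
  rw [Pi.neg_apply]
  by_cases hki : k = i
  · rw [hki, flv_i]
  · by_cases hkj : k = j
    · rw [hkj, flv_j hij]
    · rw [flv_other hki hkj]
      simp only [Pi.single_eq_of_ne hkj, neg_zero]

lemma flv_single_other {n : ℕ} {i j m : Fin (n+1)} (hmi : m ≠ i) (hmj : m ≠ j) (q : Quat) :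
    flv i j (Pi.single m q) = Pi.single m q := by
  funext k
  by_cases hki : k = i
  · rw [hki, flv_i]
    simp only [Pi.single_eq_of_ne (Ne.symm hmi), neg_zero]
  · by_cases hkj : k = j
    · rw [hkj]
      by_cases hij : i = j
      · rw [← hij, flv_i]
        simp only [Pi.single_eq_of_ne (Ne.symm hmi), neg_zero]
      · rw [flv_j hij]
        simp only [Pi.single_eq_of_ne (Ne.symm hmj), neg_zero]
    · rw [flv_other hki hkj]

/-! ### The key vanishing lemma -/

def dvec {n : ℕ} (d : ℝ ⊕ Fin (n+1)) (q : Quat) : Fin (n+1) → Quat :=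
  Sum.elim (fun s => uvv s q) (fun j => Pi.single j q) d

def dwt {n : ℕ} : ℝ ⊕ Fin (n+1) → ℝ := Sum.elim id (fun _ => 0)

def dok {n : ℕ} : ℝ ⊕ Fin (n+1) → Prop :=
  Sum.elim (fun s => s = 1 ∨ s = -1) (fun j => j ≠ 0 ∧ j ≠ 1)

lemma pick_other {n : ℕ} (hn : 3 ≤ n) (j : Fin (n+1)) :
    ∃ j' : Fin (n+1), j' ≠ j ∧ j' ≠ 0 ∧ j' ≠ 1 := by
  have h20 : (2 : Fin (n+1)) ≠ 0 := by
    simp only [Fin.ne_iff_vne, Fin.coe_ofNat_eq_mod, Fin.val_zero, Fin.val_one']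
    repeat rw [Nat.mod_eq_of_lt (by omega)]
    omega
  have h21 : (2 : Fin (n+1)) ≠ 1 := by
    simp only [Fin.ne_iff_vne, Fin.coe_ofNat_eq_mod, Fin.val_zero, Fin.val_one']
    repeat rw [Nat.mod_eq_of_lt (by omega)]
    omega
  have h30 : (3 : Fin (n+1)) ≠ 0 := by
    simp only [Fin.ne_iff_vne, Fin.coe_ofNat_eq_mod, Fin.val_zero, Fin.val_one']
    repeat rw [Nat.mod_eq_of_lt (by omega)]
    omega
  have h31 : (3 : Fin (n+1)) ≠ 1 := by
    simp only [Fin.ne_iff_vne, Fin.coe_ofNat_eq_mod, Fin.val_zero, Fin.val_one']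
    repeat rw [Nat.mod_eq_of_lt (by omega)]
    omega
  have h32 : (3 : Fin (n+1)) ≠ 2 := by
    simp only [Fin.ne_iff_vne, Fin.coe_ofNat_eq_mod, Fin.val_zero, Fin.val_one']
    repeat rw [Nat.mod_eq_of_lt (by omega)]
    omega
  by_cases h : j = 2
  · exact ⟨3, by rw [h]; exact h32, h30, h31⟩
  · exact ⟨2, fun h' => h h'.symm, h20, h21⟩

lemma dagger {n : ℕ} (hn : 3 ≤ n) (h10 : (1 : Fin (n+1)) ≠ 0)
    (α : (Fin (n + 1) → Quat) →ₗ[ℝ] (Fin (n + 1) → Quat) →ₗ[ℝ] (Fin (n + 1) → Quat) →ₗ[ℝ] ℝ)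
    (hboost : ∀ v1 v2 v3, α (bvv v1) (bvv v2) (bvv v3) = α v1 v2 v3)
    (hflip : ∀ i j : Fin (n+1), i ≠ j → i ≠ 0 → j ≠ 0 →
      ∀ v1 v2 v3, α (flv i j v1) (flv i j v2) (flv i j v3) = α v1 v2 v3)
    (d1 d2 d3 : ℝ ⊕ Fin (n+1)) (q1 q2 q3 : Quat)
    (h1 : dok d1) (h2 : dok d2) (h3 : dok d3) :
    α (dvec d1 q1) (dvec d2 q2) (dvec d3 q3) = 0 := by
  have heig : ∀ (d : ℝ ⊕ Fin (n+1)) (q : Quat), dok d →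
      bvv (dvec d q) = Real.exp (dwt d) • dvec d q := by
    rintro (s | j) q hd
    · exact bvv_uvv h10 hd q
    · simp only [dvec, Sum.elim_inr, dwt, Real.exp_zero, one_smul]
      exact bvv_single h10 hd.1 hd.2 q
  by_cases hw : dwt d1 + dwt d2 + dwt d3 = 0
  · -- use flips
    rcases d1 with s1 | j1 <;> rcases d2 with s2 | j2 <;> rcases d3 with s3 | j3
    · -- all three hyperbolic: impossible
      exfalso
      simp only [dwt, Sum.elim_inl, id_eq] at hw
      rcases h1 with rfl | rfl <;> rcases h2 with rfl | rfl <;> rcases h3 with rfl | rfl <;>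
        norm_num at hw
    · -- (u, u, single)
      obtain ⟨hj0, hj1⟩ := h3
      obtain ⟨j', hj'j, hj'0, hj'1⟩ := pick_other hn j3
      have hf := hflip j3 j' (Ne.symm hj'j) hj0 hj'0 (uvv s1 q1) (uvv s2 q2)
        (Pi.single j3 q3)
      rw [flv_uvv hj0 hj1 hj'0 hj'1, flv_uvv hj0 hj1 hj'0 hj'1, flv_single_i,
        map_neg] at hf
      show α (uvv s1 q1) (uvv s2 q2) (Pi.single j3 q3) = 0
      linarith [hf]
    · -- (u, single, u)
      obtain ⟨hj0, hj1⟩ := h2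
      obtain ⟨j', hj'j, hj'0, hj'1⟩ := pick_other hn j2
      have hf := hflip j2 j' (Ne.symm hj'j) hj0 hj'0 (uvv s1 q1) (Pi.single j2 q2)
        (uvv s3 q3)
      rw [flv_uvv hj0 hj1 hj'0 hj'1, flv_uvv hj0 hj1 hj'0 hj'1, flv_single_i,
        map_neg, LinearMap.neg_apply] at hf
      show α (uvv s1 q1) (Pi.single j2 q2) (uvv s3 q3) = 0
      linarith [hf]
    · -- (u, single, single): weight s1 = 0, contradiction
      exfalso
      simp only [dwt, Sum.elim_inl, Sum.elim_inr, id_eq, add_zero] at hw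
      rcases h1 with rfl | rfl <;> norm_num at hw
    · -- (single, u, u)
      obtain ⟨hj0, hj1⟩ := h1
      obtain ⟨j', hj'j, hj'0, hj'1⟩ := pick_other hn j1
      have hf := hflip j1 j' (Ne.symm hj'j) hj0 hj'0 (Pi.single j1 q1) (uvv s2 q2)
        (uvv s3 q3)
      rw [flv_uvv hj0 hj1 hj'0 hj'1, flv_uvv hj0 hj1 hj'0 hj'1, flv_single_i,
        map_neg, LinearMap.neg_apply, LinearMap.neg_apply] at hf
      show α (Pi.single j1 q1) (uvv s2 q2) (uvv s3 q3) = 0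
      linarith [hf]
    · -- (single, u, single): weight s2 = 0, contradiction
      exfalso
      simp only [dwt, Sum.elim_inl, Sum.elim_inr, id_eq, add_zero, zero_add] at hw
      rcases h2 with rfl | rfl <;> norm_num at hw
    · -- (single, single, u)
      exfalso
      simp only [dwt, Sum.elim_inl, Sum.elim_inr, id_eq, zero_add] at hw
      rcases h3 with rfl | rfl <;> norm_num at hw
    · -- (single, single, single)
      obtain ⟨hj10, hj11⟩ := h1
      obtain ⟨hj20, hj21⟩ := h2
      obtain ⟨hj30, hj31⟩ := h3
      show α (Pi.single j1 q1) (Pi.single j2 q2) (Pi.single j3 q3) = 0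
      by_cases hkj : j2 = j1
      · subst hkj
        by_cases hlj : j3 = j2
        · subst hlj
          have hf := hflip 1 j3 (fun h => hj31 h.symm) h10 hj30
            (Pi.single j3 q1) (Pi.single j3 q2) (Pi.single j3 q3)
          rw [flv_single_j (fun h => hj31 h.symm), flv_single_j (fun h => hj31 h.symm),
            flv_single_j (fun h => hj31 h.symm), map_neg, map_neg, map_neg,
            LinearMap.neg_apply, LinearMap.neg_apply, LinearMap.neg_apply] at hf
          simp only [neg_neg] at hf
          linarith [hf]
        · -- j3 ≠ j2 = j1 : flip (1, j3), only third negated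
          have hf := hflip 1 j3 (fun h => hj31 h.symm) h10 hj30
            (Pi.single j2 q1) (Pi.single j2 q2) (Pi.single j3 q3)
          rw [flv_single_other hj21 (fun h => hlj h.symm),
            flv_single_other hj21 (fun h => hlj h.symm),
            flv_single_j (fun h => hj31 h.symm), map_neg] at hf
          linarith [hf]
      · by_cases hlj : j3 = j1
        · -- j2 ≠ j1 = j3 : flip (1, j2), only second negated
          subst hlj
          have hf := hflip 1 j2 (fun h => hj21 h.symm) h10 hj20
            (Pi.single j3 q1) (Pi.single j2 q2) (Pi.single j3 q3)
          rw [flv_single_other hj31 (fun h => hkj h.symm),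
            flv_single_other hj31 (fun h => hkj h.symm),
            flv_single_j (fun h => hj21 h.symm), map_neg, LinearMap.neg_apply] at hf
          linarith [hf]
        · -- j2 ≠ j1, j3 ≠ j1 : flip (1, j1), only first negated
          have hf := hflip 1 j1 (fun h => hj11 h.symm) h10 hj10
            (Pi.single j1 q1) (Pi.single j2 q2) (Pi.single j3 q3)
          rw [flv_single_j (fun h => hj11 h.symm), flv_single_other hj21 hkj,
            flv_single_other hj31 hlj, map_neg, LinearMap.neg_apply,
            LinearMap.neg_apply] at hf
          linarith [hf]
  · -- use the boost
    have hb := hboost (dvec d1 q1) (dvec d2 q2) (dvec d3 q3)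
    rw [heig d1 q1 h1, heig d2 q2 h2, heig d3 q3 h3] at hb
    simp only [LinearMap.map_smul, LinearMap.smul_apply, smul_eq_mul] at hb
    have hexp : Real.exp (dwt d1) * (Real.exp (dwt d2) * Real.exp (dwt d3))
        = Real.exp (dwt d1 + dwt d2 + dwt d3) := by
      rw [Real.exp_add, Real.exp_add, mul_assoc]
    have hne : Real.exp (dwt d1 + dwt d2 + dwt d3) ≠ 1 := by
      intro h
      exact hw (by simpa using h)
    have hz : (Real.exp (dwt d1 + dwt d2 + dwt d3) - 1)
        * α (dvec d1 q1) (dvec d2 q2) (dvec d3 q3) = 0 := by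
      rw [sub_mul, one_mul, ← hexp]
      linarith [hb]
    rcases mul_eq_zero.mp hz with h | h
    · exact absurd (by linarith [h] : Real.exp (dwt d1 + dwt d2 + dwt d3) = 1) hne
    · exact h

/-! ### Decompositions of basis vectors -/

lemma single_zero_decomp {n : ℕ} (q : Quat) :
    (Pi.single (0 : Fin (n+1)) q : Fin (n+1) → Quat)
      = (2⁻¹ : ℝ) • uvv 1 q + (2⁻¹ : ℝ) • uvv (-1) q := by
  funext k
  rw [Pi.add_apply, Pi.smul_apply, Pi.smul_apply, Pi.single_apply]
  by_cases hk0 : k = 0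
  · rw [if_pos hk0, hk0, uvv_zero, uvv_zero, ← add_smul]
    norm_num
  · rw [if_neg hk0]
    by_cases hk1 : k = 1
    · rw [hk1]
      by_cases h10 : (1 : Fin (n+1)) = 0
      · exact absurd (hk1.trans h10) hk0
      · rw [uvv_one h10, uvv_one h10, smul_smul, smul_smul, ← add_smul]
        norm_num
    · simp [uvv_other hk0 hk1]

lemma single_one_decomp {n : ℕ} (h10 : (1 : Fin (n+1)) ≠ 0) (q : Quat) :
    (Pi.single (1 : Fin (n+1)) q : Fin (n+1) → Quat)
      = (2⁻¹ : ℝ) • uvv 1 q - (2⁻¹ : ℝ) • uvv (-1) q := by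
  funext k
  rw [Pi.sub_apply, Pi.smul_apply, Pi.smul_apply, Pi.single_apply]
  by_cases hk0 : k = 0
  · rw [if_neg (fun h : k = 1 => h10 (h ▸ hk0)), hk0, uvv_zero, uvv_zero, sub_self]
  · by_cases hk1 : k = 1
    · rw [if_pos hk1, hk1, uvv_one h10, uvv_one h10, smul_smul, smul_smul, ← sub_smul]
      norm_num
    · rw [if_neg hk1]
      simp [uvv_other hk0 hk1]

theorem invariant_trilinear_forms_vanish
    (n : ℕ) (hn : 3 ≤ n)
    (α : (Fin (n + 1) → Quat) →ₗ[ℝ] (Fin (n + 1) → Quat) →ₗ[ℝ] (Fin (n + 1) → Quat) →ₗ[ℝ] ℝ)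
    (hinv : ∀ g ∈ SOo n, ∀ v₁ v₂ v₃ : Fin (n + 1) → Quat,
      α (g.mulVec v₁) (g.mulVec v₂) (g.mulVec v₃) = α v₁ v₂ v₃) :
    α = 0 := by
  have h10 : (1 : Fin (n+1)) ≠ 0 := by
    simp only [Fin.ne_iff_vne, Fin.coe_ofNat_eq_mod, Fin.val_zero, Fin.val_one']
    repeat rw [Nat.mod_eq_of_lt (by omega)]
    omega
  have h01 : (0 : Fin (n+1)) ≠ 1 := Ne.symm h10
  have hboost : ∀ v1 v2 v3, α (bvv v1) (bvv v2) (bvv v3) = α v1 v2 v3 := by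
    intro v1 v2 v3
    have h := hinv _ (boostM_mem h10) v1 v2 v3
    rwa [mulVec_boost h01, mulVec_boost h01, mulVec_boost h01] at h
  have hflip : ∀ i j : Fin (n+1), i ≠ j → i ≠ 0 → j ≠ 0 →
      ∀ v1 v2 v3, α (flv i j v1) (flv i j v2) (flv i j v3) = α v1 v2 v3 := by
    intro i j hij hi hj v1 v2 v3
    have h := hinv _ (flipM_mem hij hi hj) v1 v2 v3
    rwa [mulVec_flip hij, mulVec_flip hij, mulVec_flip hij] at h
  have key0 : ∀ (d1 d2 d3 : ℝ ⊕ Fin (n+1)) (q1 q2 q3 : Quat),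
      dok d1 → dok d2 → dok d3 → α (dvec d1 q1) (dvec d2 q2) (dvec d3 q3) = 0 :=
    fun d1 d2 d3 q1 q2 q3 h1 h2 h3 => dagger hn h10 α hboost hflip d1 d2 d3 q1 q2 q3 h1 h2 h3
  have key1 : ∀ (d2 d3 : ℝ ⊕ Fin (n+1)) (q2 q3 : Quat), dok d2 → dok d3 →
      ∀ (a : Fin (n+1)) (q1 : Quat),
        α (Pi.single a q1) (dvec d2 q2) (dvec d3 q3) = 0 := by
    intro d2 d3 q2 q3 h2 h3 a q1
    have z1 : α (uvv 1 q1) (dvec d2 q2) (dvec d3 q3) = 0 :=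
      key0 (Sum.inl 1) d2 d3 q1 q2 q3 (Or.inl rfl) h2 h3
    have z2 : α (uvv (-1) q1) (dvec d2 q2) (dvec d3 q3) = 0 :=
      key0 (Sum.inl (-1)) d2 d3 q1 q2 q3 (Or.inr rfl) h2 h3
    by_cases ha0 : a = 0
    · rw [ha0, single_zero_decomp, map_add, LinearMap.map_smul, LinearMap.map_smul,
        LinearMap.add_apply, LinearMap.smul_apply, LinearMap.smul_apply,
        LinearMap.add_apply, LinearMap.smul_apply, LinearMap.smul_apply, z1, z2]
      simp
    · by_cases ha1 : a = 1
      · rw [ha1, single_one_decomp h10, map_sub, LinearMap.map_smul, LinearMap.map_smul,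
          LinearMap.sub_apply, LinearMap.smul_apply, LinearMap.smul_apply,
          LinearMap.sub_apply, LinearMap.smul_apply, LinearMap.smul_apply, z1, z2]
        simp
      · exact key0 (Sum.inr a) d2 d3 q1 q2 q3 ⟨ha0, ha1⟩ h2 h3
  have key2 : ∀ (d3 : ℝ ⊕ Fin (n+1)) (q3 : Quat), dok d3 →
      ∀ (a b : Fin (n+1)) (q1 q2 : Quat),
        α (Pi.single a q1) (Pi.single b q2) (dvec d3 q3) = 0 := by
    intro d3 q3 h3 a b q1 q2
    have z1 : α (Pi.single a q1) (uvv 1 q2) (dvec d3 q3) = 0 :=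
      key1 (Sum.inl 1) d3 q2 q3 (Or.inl rfl) h3 a q1
    have z2 : α (Pi.single a q1) (uvv (-1) q2) (dvec d3 q3) = 0 :=
      key1 (Sum.inl (-1)) d3 q2 q3 (Or.inr rfl) h3 a q1
    by_cases hb0 : b = 0
    · rw [hb0, single_zero_decomp, map_add, LinearMap.map_smul, LinearMap.map_smul,
        LinearMap.add_apply, LinearMap.smul_apply, LinearMap.smul_apply, z1, z2]
      simp
    · by_cases hb1 : b = 1
      · rw [hb1, single_one_decomp h10, map_sub, LinearMap.map_smul, LinearMap.map_smul,
          LinearMap.sub_apply, LinearMap.smul_apply, LinearMap.smul_apply, z1, z2]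
        simp
      · exact key1 (Sum.inr b) d3 q2 q3 ⟨hb0, hb1⟩ h3 a q1
  have key3 : ∀ (a b c : Fin (n+1)) (q1 q2 q3 : Quat),
      α (Pi.single a q1) (Pi.single b q2) (Pi.single c q3) = 0 := by
    intro a b c q1 q2 q3
    have z1 : α (Pi.single a q1) (Pi.single b q2) (uvv 1 q3) = 0 :=
      key2 (Sum.inl 1) q3 (Or.inl rfl) a b q1 q2
    have z2 : α (Pi.single a q1) (Pi.single b q2) (uvv (-1) q3) = 0 :=
      key2 (Sum.inl (-1)) q3 (Or.inr rfl) a b q1 q2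
    by_cases hc0 : c = 0
    · rw [hc0, single_zero_decomp, map_add, LinearMap.map_smul, LinearMap.map_smul, z1, z2]
      simp
    · by_cases hc1 : c = 1
      · rw [hc1, single_one_decomp h10, map_sub, LinearMap.map_smul, LinearMap.map_smul,
          z1, z2]
        simp
      · exact key2 (Sum.inr c) q3 ⟨hc0, hc1⟩ a b q1 q2
  apply LinearMap.ext; intro v1
  apply LinearMap.ext; intro v2
  apply LinearMap.ext; intro v3
  have hv : ∀ v : Fin (n+1) → Quat, v = ∑ a, Pi.single a (v a) := by
    intro v
    funext i
    rw [Finset.sum_apply]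
    exact (Fintype.sum_pi_single i v).symm
  conv_lhs => rw [hv v1, hv v2, hv v3]
  simp only [map_sum, LinearMap.sum_apply]
  apply Finset.sum_eq_zero
  intro a _
  apply Finset.sum_eq_zero
  intro b _
  apply Finset.sum_eq_zero
  intro c _
  simp [key3]
end
end

section
/- Let m ≥ 4. If β : ℂ^m × ℂ^m × ℂ^m → ℂ is ℂ-trilinear and satisfies β(A v₁, A v₂, A v₃) = β(v₁, v₂, v₃) for all A ∈ SO(m,ℂ) and all v₁, v₂, v₃ ∈ ℂ^m, then β = 0. -/
/- Statement 3: SO(m,ℂ)-invariant complex trilinear forms on ℂ^m vanish for m ≥ 4. -/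

open Matrix

noncomputable section

/-- The complex special orthogonal group SO(m,ℂ) of the standard symmetric bilinear form. -/
def SOC (m : ℕ) : Set (Matrix (Fin m) (Fin m) ℂ) :=
  {A | Aᵀ * A = 1 ∧ A.det = 1}

private lemma key_sign {m : ℕ}
    (β : (Fin m → ℂ) →ₗ[ℂ] (Fin m → ℂ) →ₗ[ℂ] (Fin m → ℂ) →ₗ[ℂ] ℂ)
    (hinv : ∀ A ∈ SOC m, ∀ v₁ v₂ v₃ : Fin m → ℂ,
      β (A.mulVec v₁) (A.mulVec v₂) (A.mulVec v₃) = β v₁ v₂ v₃)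
    (i j k : Fin m) (T : Finset (Fin m))
    (hcard : Even T.card)
    (hsign : (if i ∈ T then (-1:ℂ) else 1) * (if j ∈ T then (-1:ℂ) else 1)
        * (if k ∈ T then (-1:ℂ) else 1) = -1) :
    β (Pi.single i 1) (Pi.single j 1) (Pi.single k 1) = 0 := by
  set ε : Fin m → ℂ := fun x => if x ∈ T then (-1:ℂ) else 1 with hε
  have hεsq : ∀ x, ε x * ε x = 1 := by
    intro x; by_cases h : x ∈ T <;> simp [hε, h]
  have hA : Matrix.diagonal ε ∈ SOC m := by
    constructor
    · rw [Matrix.diagonal_transpose, Matrix.diagonal_mul_diagonal]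
      have : (fun x => ε x * ε x) = fun _ => (1:ℂ) := funext hεsq
      rw [this]; exact Matrix.diagonal_one
    · rw [Matrix.det_diagonal]
      have : ∏ x, ε x = (-1:ℂ) ^ T.card := by
        simp [hε, Finset.prod_ite_mem]
      rw [this, hcard.neg_one_pow]
  have hmul : ∀ x : Fin m, (Matrix.diagonal ε).mulVec (Pi.single x 1) = ε x • (Pi.single x 1 : Fin m → ℂ) := by
    intro x
    rw [Matrix.diagonal_mulVec_single, mul_one, ← Pi.single_smul, smul_eq_mul, mul_one]
  have h := hinv _ hA (Pi.single i 1) (Pi.single j 1) (Pi.single k 1)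
  rw [hmul, hmul, hmul] at h
  simp only [_root_.map_smul, LinearMap.smul_apply, smul_eq_mul] at h
  have h2 : (ε i * ε j * ε k) * β (Pi.single i 1) (Pi.single j 1) (Pi.single k 1)
      = β (Pi.single i 1) (Pi.single j 1) (Pi.single k 1) := by ring_nf; ring_nf at h; linear_combination h
  rw [hsign] at h2
  linear_combination -h2/2

theorem invariant_complex_trilinear_forms_vanish
    (m : ℕ) (hm : 4 ≤ m)
    (β : (Fin m → ℂ) →ₗ[ℂ] (Fin m → ℂ) →ₗ[ℂ] (Fin m → ℂ) →ₗ[ℂ] ℂ)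
    (hinv : ∀ A ∈ SOC m, ∀ v₁ v₂ v₃ : Fin m → ℂ,
      β (A.mulVec v₁) (A.mulVec v₂) (A.mulVec v₃) = β v₁ v₂ v₃) :
    β = 0 := by
  have hb : ∀ i j k : Fin m, β (Pi.single i 1) (Pi.single j 1) (Pi.single k 1) = 0 := by
    intro i j k
    obtain ⟨l, hli, hlj, hlk⟩ : ∃ l : Fin m, l ≠ i ∧ l ≠ j ∧ l ≠ k := by
      by_contra h
      push_neg at h
      have hsub : (Finset.univ : Finset (Fin m)) ⊆ {i, j, k} := by
        intro x _
        by_cases h1 : x = i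
        · simp [h1]
        by_cases h2 : x = j
        · simp [h2]
        simp [h x h1 h2]
      have := Finset.card_le_card hsub
      have h3 : ({i, j, k} : Finset (Fin m)).card ≤ 3 := by
        apply le_trans (Finset.card_insert_le _ _)
        apply Nat.succ_le_succ
        apply le_trans (Finset.card_insert_le _ _)
        simp
      simp [Finset.card_univ] at this
      omega
    by_cases hij : i = j
    · subst hij
      apply key_sign β hinv i i k {k, l}
      · rw [Finset.card_pair (Ne.symm hlk)]; exact even_two
      · by_cases h : i ∈ ({k, l} : Finset (Fin m)) <;> simp [h, hlk.symm]
    · by_cases hik : i = k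
      · subst hik
        apply key_sign β hinv i j i {j, l}
        · rw [Finset.card_pair (Ne.symm hlj)]; exact even_two
        · by_cases h : i ∈ ({j, l} : Finset (Fin m)) <;> simp [h, hlj.symm] <;> ring
      · by_cases hjk : j = k
        · subst hjk
          apply key_sign β hinv i j j {i, l}
          · rw [Finset.card_pair (Ne.symm hli)]; exact even_two
          · by_cases h : j ∈ ({i, l} : Finset (Fin m)) <;> simp [h, hli.symm] <;> ring
        · apply key_sign β hinv i j k {i, j, k, l}
          · have : ({i, j, k, l} : Finset (Fin m)).card = 4 := by
              rw [Finset.card_insert_of_notMem (by simp [hij, hik, hli.symm]),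
                Finset.card_insert_of_notMem (by simp [hjk, hlj.symm]),
                Finset.card_pair hlk.symm]
            rw [this]; decide
          · simp only [Finset.mem_insert, Finset.mem_singleton, true_or, or_true, if_pos]
            ring
  apply Module.Basis.ext (Pi.basisFun ℂ (Fin m)); intro i
  apply Module.Basis.ext (Pi.basisFun ℂ (Fin m)); intro j
  apply Module.Basis.ext (Pi.basisFun ℂ (Fin m)); intro k
  simpa [Pi.basisFun_apply] using hb i j k
end
end

section
/- Let V denote ℍ² regarded as a real vector space of dimension 8, and let G be one of the following subsets of Mat₂(ℍ): (a) {B(t) : t ∈ ℝ}; (b) {λ·B(t) : t ∈ ℝ, λ ∈ span_ℝ{1,i}, |λ| = 1}; (c) {q·B(t) : t ∈ ℝ, q ∈ ℍ, |q| = 1}; (d) S_{a,b} := {(cos(bt) + sin(bt)·i)·B(at) : t ∈ ℝ} for some fixed nonzero real numbers a, b. If α : V × V × V → ℝ is ℝ-trilinear and satisfies α(A v₁, A v₂, A v₃) = α(v₁, v₂, v₃) for all A ∈ G and all v₁, v₂, v₃ ∈ V, then α = 0. -/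
/-!
Each of the four groups contains some `B(t)` with `t ≠ 0`: in case (d) take the time `2π / b`, at
which the quaternionic phase returns to `1`. As a real endomorphism of `ℍ²`, `B(t)` is
diagonalisable with eigenvalues `e^t` (on vectors `(x, x)`) and `e^{-t}` (on vectors `(x, -x)`).
An invariant trilinear form is therefore zero on every triple of eigenvectors, since the product of
three eigenvalues is `e^{kt}` with `k` odd, hence never `1`; by trilinearity it vanishes.
-/

open Quaternion Matrix

noncomputable section

/-- The imaginary unit `i` of the quaternions. -/
def qi : Quat := ⟨0, 1, 0, 0⟩

/-- The matrix B(t) = [[cosh t, sinh t],[sinh t, cosh t]]. -/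
def Bmat (t : ℝ) : Matrix (Fin 2) (Fin 2) Quat :=
  !![(Real.cosh t : ℝ), (Real.sinh t : ℝ); (Real.sinh t : ℝ), (Real.cosh t : ℝ)]

/-- (a) The group {B(t) : t ∈ ℝ}, i.e. SO⁰(1,1). -/
def Ga : Set (Matrix (Fin 2) (Fin 2) Quat) :=
  {M | ∃ t : ℝ, M = Bmat t}

/-- (b) The group {λ·B(t)} with λ a unit-norm element of span_ℝ{1,i}. -/
def Gb : Set (Matrix (Fin 2) (Fin 2) Quat) :=
  {M | ∃ t : ℝ, ∃ l : Quat, l.imJ = 0 ∧ l.imK = 0 ∧ ‖l‖ = 1 ∧ M = l • Bmat t}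

/-- (c) The group {q·B(t)} with q a unit quaternion. -/
def Gc : Set (Matrix (Fin 2) (Fin 2) Quat) :=
  {M | ∃ t : ℝ, ∃ q : Quat, ‖q‖ = 1 ∧ M = q • Bmat t}

/-- (d) The one-parameter group S_{a,b} = {(cos(bt) + sin(bt)·i)·B(at) : t ∈ ℝ}. -/
def Sab (a b : ℝ) : Set (Matrix (Fin 2) (Fin 2) Quat) :=
  {M | ∃ t : ℝ, M = (((Real.cos (b * t) : ℝ) : Quat) + ((Real.sin (b * t) : ℝ) : Quat) * qi) • Bmat (a * t)}

open Module End

section EigenspaceDecomposition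

variable {K M N : Type*} [Field K] [AddCommGroup M] [Module K M] [AddCommGroup N] [Module K N]
  {T : End K M} {S : Set K}

theorem LinearMap.eq_zero_of_eigenspace_le_ker {P : Type*} [AddCommGroup P] [Module K P]
    (hT : ⨆ μ ∈ S, T.eigenspace μ = ⊤) {f : M →ₗ[K] P} (hf : ∀ μ ∈ S, T.eigenspace μ ≤ ker f) :
    f = 0 :=
  LinearMap.ker_eq_top.1 <| top_le_iff.1 <| hT ▸ iSup₂_le hf

theorem trilinear_apply_eq_zero_of_mem_eigenspace (α : M →ₗ[K] M →ₗ[K] M →ₗ[K] N)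
    (hα : ∀ u v w, α (T u) (T v) (T w) = α u v w) {a b c : K} (habc : a * b * c ≠ 1)
    {u v w : M} (hu : u ∈ T.eigenspace a) (hv : v ∈ T.eigenspace b) (hw : w ∈ T.eigenspace c) :
    α u v w = 0 := by
  have h := hα u v w
  rw [mem_eigenspace_iff.1 hu, mem_eigenspace_iff.1 hv, mem_eigenspace_iff.1 hw] at h
  simp only [map_smul, LinearMap.smul_apply, smul_smul] at h
  have h' : (c * (b * a) - 1) • α u v w = 0 := by rw [sub_smul, one_smul, h, sub_self]
  exact (smul_eq_zero.1 h').resolve_left (sub_ne_zero.2 (by rwa [mul_comm c, mul_comm b]))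

theorem trilinear_eq_zero_of_invariant (hT : ⨆ μ ∈ S, T.eigenspace μ = ⊤)
    (hS : ∀ a ∈ S, ∀ b ∈ S, ∀ c ∈ S, a * b * c ≠ 1) (α : M →ₗ[K] M →ₗ[K] M →ₗ[K] N)
    (hα : ∀ u v w, α (T u) (T v) (T w) = α u v w) : α = 0 :=
  LinearMap.eq_zero_of_eigenspace_le_ker hT fun a ha _ hu => LinearMap.mem_ker.2 <|
    LinearMap.eq_zero_of_eigenspace_le_ker hT fun b hb _ hv => LinearMap.mem_ker.2 <|
      LinearMap.eq_zero_of_eigenspace_le_ker hT fun c hc _ hw => LinearMap.mem_ker.2 <|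
        trilinear_apply_eq_zero_of_mem_eigenspace α hα (hS a ha b hb c hc) hu hv hw

end EigenspaceDecomposition

theorem Bmat_mulVec_diag (t : ℝ) (x : Quat) : Bmat t *ᵥ ![x, x] = Real.exp t • ![x, x] := by
  ext i : 1
  fin_cases i <;>
    simp [Bmat, Matrix.mulVec, dotProduct, Fin.sum_univ_two,
      ← Quaternion.coe_mul_eq_smul, ← add_mul, ← Quaternion.coe_add, Real.exp_eq_exp_ℝ]

theorem Bmat_mulVec_antidiag (t : ℝ) (x : Quat) :
    Bmat t *ᵥ ![x, -x] = Real.exp (-t) • ![x, -x] := by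
  have h : (Real.cosh t : Quat) - Real.sinh t = Real.exp (-t) := by
    rw [← Quaternion.coe_sub, Real.cosh_sub_sinh]
  have h' : (Real.sinh t : Quat) - Real.cosh t = -Real.exp (-t) := by rw [← h, neg_sub]
  ext i : 1
  fin_cases i <;>
    simp [Bmat, Matrix.mulVec, dotProduct, Fin.sum_univ_two, ← Quaternion.coe_mul_eq_smul,
      ← sub_eq_add_neg, ← sub_mul, h, h']

theorem iSup_eigenspace_mulVecBilin_Bmat (t : ℝ) :
    ⨆ μ ∈ ({Real.exp t, Real.exp (-t)} : Set ℝ), eigenspace (mulVecBilin ℝ ℝ (Bmat t)) μ = ⊤ := by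
  rw [iSup_insert, iSup_singleton, eq_top_iff]
  intro v _
  have hv : v = (2⁻¹ : ℝ) • ![v 0 + v 1, v 0 + v 1] + (2⁻¹ : ℝ) • ![v 0 - v 1, -(v 0 - v 1)] := by
    ext i : 1
    fin_cases i <;> simp <;> module
  rw [hv]
  refine Submodule.add_mem_sup (Submodule.smul_mem _ _ ?_) (Submodule.smul_mem _ _ ?_) <;>
    rw [mem_eigenspace_iff]
  · exact Bmat_mulVec_diag t _
  · exact Bmat_mulVec_antidiag t _

theorem mul_mul_ne_one_of_mem_exp_pair {t : ℝ} (ht : t ≠ 0) :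
    ∀ a ∈ ({Real.exp t, Real.exp (-t)} : Set ℝ), ∀ b ∈ ({Real.exp t, Real.exp (-t)} : Set ℝ),
      ∀ c ∈ ({Real.exp t, Real.exp (-t)} : Set ℝ), a * b * c ≠ 1 := by
  simp only [Set.mem_insert_iff, Set.mem_singleton_iff]
  rintro a (rfl | rfl) b (rfl | rfl) c (rfl | rfl) <;>
    rw [← Real.exp_add, ← Real.exp_add, Ne, Real.exp_eq_one_iff] <;>
    intro h <;> exact ht (by linarith)

theorem Bmat_mem_Ga (t : ℝ) : Bmat t ∈ Ga := ⟨t, rfl⟩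

theorem Bmat_mem_Gb (t : ℝ) : Bmat t ∈ Gb := ⟨t, 1, rfl, rfl, norm_one, (one_smul _ _).symm⟩

theorem Bmat_mem_Gc (t : ℝ) : Bmat t ∈ Gc := ⟨t, 1, norm_one, (one_smul _ _).symm⟩

theorem Bmat_mem_Sab (a : ℝ) {b : ℝ} (hb : b ≠ 0) : Bmat (a * (2 * Real.pi / b)) ∈ Sab a b :=
  ⟨2 * Real.pi / b, by simp [mul_div_cancel₀ _ hb]⟩

theorem invariant_trilinear_forms_vanish_dim8
    (G : Set (Matrix (Fin 2) (Fin 2) Quat))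
    (hG : G = Ga ∨ G = Gb ∨ G = Gc ∨ ∃ a b : ℝ, a ≠ 0 ∧ b ≠ 0 ∧ G = Sab a b)
    (α : (Fin 2 → Quat) →ₗ[ℝ] (Fin 2 → Quat) →ₗ[ℝ] (Fin 2 → Quat) →ₗ[ℝ] ℝ)
    (hinv : ∀ A ∈ G, ∀ v₁ v₂ v₃ : Fin 2 → Quat,
      α (A.mulVec v₁) (A.mulVec v₂) (A.mulVec v₃) = α v₁ v₂ v₃) :
    α = 0 := by
  obtain ⟨t, ht, hmem⟩ : ∃ t ≠ 0, Bmat t ∈ G := by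
    rcases hG with rfl | rfl | rfl | ⟨a, b, ha, hb, rfl⟩
    · exact ⟨1, one_ne_zero, Bmat_mem_Ga 1⟩
    · exact ⟨1, one_ne_zero, Bmat_mem_Gb 1⟩
    · exact ⟨1, one_ne_zero, Bmat_mem_Gc 1⟩
    · exact ⟨_, mul_ne_zero ha (div_ne_zero (by positivity) hb), Bmat_mem_Sab a hb⟩
  exact trilinear_eq_zero_of_invariant (iSup_eigenspace_mulVecBilin_Bmat t)
    (mul_mul_ne_one_of_mem_exp_pair ht) α (hinv _ hmem)
end
end

section
/- Let x := [[0, -i/2],[i/2, 0]] and y := [[0, -j/2],[j/2, 0]] in Mat₂(ℍ). If W ⊆ ℍ² is a right ℍ-submodule satisfying x·W ⊆ W and y·W ⊆ W (action by matrix–vector multiplication), then W = {0} or W = ℍ². -/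
/- Statement 7: the pair of matrices x, y acts ℍ-irreducibly on ℍ². -/

open Quaternion Matrix

noncomputable section

/-- The imaginary unit `j` of the quaternions. -/
def qj : Quat := ⟨0, 0, 1, 0⟩

/-- The matrix x = [[0, -i/2],[i/2, 0]]. -/
def xmat : Matrix (Fin 2) (Fin 2) Quat := !![0, -((1/2 : ℝ) • qi); (1/2 : ℝ) • qi, 0]

/-- The matrix y = [[0, -j/2],[j/2, 0]]. -/
def ymat : Matrix (Fin 2) (Fin 2) Quat := !![0, -((1/2 : ℝ) • qj); (1/2 : ℝ) • qj, 0]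

/- If `W ≠ ⊥, ⊤`, an antidiagonal matrix `!![0, -a; a, 0]` (`a ≠ 0`) preserving `W` keeps `W`
off the first axis, so `W` contains some `![q, 1]`, and then it forces `q a q = -a`. The matrices
`x`, `y` are of this form with `a = i/2, j/2`, so `q i q = -i` and `q j q = -j`. Since `i² = -1`,
the first says `(q i)² = 1`, i.e. `q = ±i`; likewise `q = ±j`, which is absurd. -/

section DivisionRing

variable {D : Type*} [DivisionRing D] {W : Submodule Dᵐᵒᵖ (Fin 2 → D)} {a : D}

lemma Submodule.eq_top_of_vecCons_mem {c d : D} (hc : c ≠ 0) (hd : d ≠ 0)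
    (hc_mem : ![c, 0] ∈ W) (hd_mem : ![0, d] ∈ W) : W = ⊤ := by
  rw [Submodule.eq_top_iff']
  intro w
  have hw : w = MulOpposite.op (c⁻¹ * w 0) • ![c, 0]
      + MulOpposite.op (d⁻¹ * w 1) • ![0, d] := by
    ext i; fin_cases i <;> simp [hc, hd]
  rw [hw]
  exact W.add_mem (W.smul_mem _ hc_mem) (W.smul_mem _ hd_mem)

section Antidiagonal

variable (hW : ∀ v ∈ W, !![0, -a; a, 0] *ᵥ v ∈ W) (ha : a ≠ 0) (htop : W ≠ ⊤)
include hW ha htop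

lemma eq_zero_of_vecCons_zero_mem {c : D} (hc : ![c, 0] ∈ W) : c = 0 := by
  by_contra hc0
  have had : ![0, a * c] ∈ W := by simpa using hW _ hc
  exact htop (Submodule.eq_top_of_vecCons_mem hc0 (mul_ne_zero ha hc0) hc had)

lemma exists_vecCons_one_mem (hbot : W ≠ ⊥) : ∃ q : D, ![q, 1] ∈ W := by
  obtain ⟨v, hv, hv0⟩ := (Submodule.ne_bot_iff W).mp hbot
  have hv1 : v 1 ≠ 0 := by
    intro hv1
    have hv_eq : v = ![v 0, 0] := by ext i; fin_cases i <;> simp [hv1]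
    have hv0' : v 0 = 0 := eq_zero_of_vecCons_zero_mem hW ha htop (hv_eq ▸ hv)
    exact hv0 (by ext i; fin_cases i <;> simp [hv0', hv1])
  have hv_smul : MulOpposite.op (v 1)⁻¹ • v = ![v 0 * (v 1)⁻¹, 1] := by
    ext i; fin_cases i <;> simp [hv1]
  exact ⟨_, hv_smul ▸ W.smul_mem _ hv⟩

lemma mul_mul_eq_neg_of_vecCons_one_mem {q : D} (hq : ![q, 1] ∈ W) : q * a * q = -a := by
  have hdiff : ![-a - q * a * q, 0]
      = !![0, -a; a, 0] *ᵥ ![q, 1] - MulOpposite.op (a * q) • ![q, 1] := by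
    ext i; fin_cases i <;> simp [mul_assoc]
  rw [eq_comm, ← sub_eq_zero]
  exact eq_zero_of_vecCons_zero_mem hW ha htop (hdiff ▸ W.sub_mem (hW _ hq) (W.smul_mem _ hq))

end Antidiagonal

end DivisionRing

lemma eq_or_eq_neg_of_mul_mul_eq_neg {R : Type*} [Ring R] [NoZeroDivisors R] {a q : R}
    (ha : a * a = -1) (h : q * a * q = -a) : q = a ∨ q = -a := by
  have hsq : q * a * (q * a) = 1 := by rw [← mul_assoc, h, neg_mul, ha, neg_neg]
  have hq : q = -(q * a * a) := by rw [mul_assoc, ha, mul_neg_one, neg_neg]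
  rcases mul_self_eq_one_iff.mp hsq with hqa | hqa
  · right; rw [hq, hqa, one_mul]
  · left; rw [hq, hqa, neg_one_mul, neg_neg]

lemma mul_mul_eq_neg_of_smul {R A : Type*} [Field R] [Ring A] [Algebra R A] {r : R} {a q : A}
    (hr : r ≠ 0) (h : q * (r • a) * q = -(r • a)) : q * a * q = -a := by
  rw [mul_smul_comm, smul_mul_assoc, ← smul_neg] at h
  simpa [hr] using congrArg (r⁻¹ • ·) h

@[simp] lemma qi_re : qi.re = 0 := rfl
@[simp] lemma qi_imI : qi.imI = 1 := rfl
@[simp] lemma qi_imJ : qi.imJ = 0 := rfl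
@[simp] lemma qi_imK : qi.imK = 0 := rfl
@[simp] lemma qj_re : qj.re = 0 := rfl
@[simp] lemma qj_imI : qj.imI = 0 := rfl
@[simp] lemma qj_imJ : qj.imJ = 1 := rfl
@[simp] lemma qj_imK : qj.imK = 0 := rfl

lemma qi_ne_zero : qi ≠ 0 := fun h => by simpa using congrArg QuaternionAlgebra.imI h

lemma qj_ne_zero : qj ≠ 0 := fun h => by simpa using congrArg QuaternionAlgebra.imJ h

lemma qi_mul_qi : qi * qi = -1 := by ext <;> simp

lemma qj_mul_qj : qj * qj = -1 := by ext <;> simp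

theorem xy_act_H_irreducibly
    (W : Submodule Quatᵐᵒᵖ (Fin 2 → Quat))
    (hx : ∀ v ∈ W, xmat.mulVec v ∈ W)
    (hy : ∀ v ∈ W, ymat.mulVec v ∈ W) :
    W = ⊥ ∨ W = ⊤ := by
  by_contra! ⟨hbot, htop⟩
  have hhalf : (1 / 2 : ℝ) ≠ 0 := by norm_num
  have hi : (1 / 2 : ℝ) • qi ≠ 0 := smul_ne_zero hhalf qi_ne_zero
  have hj : (1 / 2 : ℝ) • qj ≠ 0 := smul_ne_zero hhalf qj_ne_zero
  obtain ⟨q, hq⟩ := exists_vecCons_one_mem hx hi htop hbot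
  have hqi : q = qi ∨ q = -qi := eq_or_eq_neg_of_mul_mul_eq_neg qi_mul_qi
    (mul_mul_eq_neg_of_smul hhalf (mul_mul_eq_neg_of_vecCons_one_mem hx hi htop hq))
  have hqj : q = qj ∨ q = -qj := eq_or_eq_neg_of_mul_mul_eq_neg qj_mul_qj
    (mul_mul_eq_neg_of_smul hhalf (mul_mul_eq_neg_of_vecCons_one_mem hy hj htop hq))
  rcases hqi with rfl | rfl <;> rcases hqj with h | h <;>
    simpa using congrArg QuaternionAlgebra.imI h
end
end

section
/- Let U := {A ∈ Sp(1,1) : A = [[a, -b],[εb, εa]] for some a, b ∈ ℍ and ε ∈ {±1}}. Then the identity component of U (in the subspace topology from Mat₂(ℍ)) equals the centralizer {A ∈ Sp(1,1) : AΦ = ΦA}. -/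
/- Statement 9: the identity component of U equals the centralizer of Φ in Sp(1,1). -/

open Quaternion Matrix

noncomputable section

/-- The matrix η = diag(-1,1). -/
def eta2 : Matrix (Fin 2) (Fin 2) Quat := Matrix.diagonal ![-1, 1]

/-- Sp(1,1) as a set of quaternionic matrices. -/
def Sp11 : Set (Matrix (Fin 2) (Fin 2) Quat) :=
  {A | Aᴴ * eta2 * A = eta2}

/-- The matrix Φ = [[0,-1],[1,0]]. -/
def Phi : Matrix (Fin 2) (Fin 2) Quat := !![0, -1; 1, 0]

/-- The group U of elements of Sp(1,1) of the form [[a,-b],[εb,εa]] with ε = ±1. -/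
def Ugrp : Set (Matrix (Fin 2) (Fin 2) Quat) :=
  {A ∈ Sp11 | ∃ a b : Quat, ∃ ε : Quat, (ε = 1 ∨ ε = -1) ∧ A = !![a, -b; ε * b, ε * a]}


lemma eta2_eq : eta2 = !![-1, 0; 0, 1] := by
  refine Matrix.ext fun i j => ?_
  fin_cases i <;> fin_cases j <;> simp [eta2]

/-- The "plus part" of U. -/
def Uplus : Set (Matrix (Fin 2) (Fin 2) Quat) :=
  {A | ∃ a b : Quat, normSq a - normSq b = 1 ∧ star a * b + star b * a = 0 ∧
    A = !![a, -b; b, a]}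

lemma mem_Sp11_of_cond {x y : Quat} (h1 : normSq x - normSq y = 1)
    (h2 : star x * y + star y * x = 0) : !![x, -y; y, x] ∈ Sp11 := by
  have hx : star x * x = ((normSq x : ℝ) : Quat) := Quaternion.star_mul_self x
  have hy : star y * y = ((normSq y : ℝ) : Quat) := Quaternion.star_mul_self y
  show _ = _
  rw [eta2_eq]
  refine Matrix.ext fun i j => ?_
  fin_cases i <;> fin_cases j <;>
    simp [Matrix.mul_apply, Fin.sum_univ_two, Matrix.conjTranspose_apply]
  · rw [hx, hy]
    have : ((normSq y - normSq x : ℝ) : Quat) = ((-1 : ℝ) : Quat) := by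
      rw [show normSq y - normSq x = (-1 : ℝ) by linarith]
    push_cast at this
    rw [← this]; abel
  · exact h2
  · rw [add_comm]; exact h2
  · rw [hx, hy]
    have : ((normSq x - normSq y : ℝ) : Quat) = ((1 : ℝ) : Quat) := by rw [h1]
    push_cast at this
    rw [← this]; abel

lemma Uplus_subset_Sp11 : Uplus ⊆ Sp11 := by
  rintro A ⟨a, b, h1, h2, rfl⟩
  exact mem_Sp11_of_cond h1 h2

lemma Uplus_subset_Ugrp : Uplus ⊆ Ugrp := by
  rintro A hA
  obtain ⟨a, b, h1, h2, rfl⟩ := hA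
  refine ⟨mem_Sp11_of_cond h1 h2, a, b, 1, Or.inl rfl, ?_⟩
  simp

lemma one_eq_Mup : (1 : Matrix (Fin 2) (Fin 2) Quat) = !![1, -0; 0, 1] := by
  refine Matrix.ext fun i j => ?_
  fin_cases i <;> fin_cases j <;> simp [Matrix.one_apply]

lemma one_mem_Uplus : (1 : Matrix (Fin 2) (Fin 2) Quat) ∈ Uplus :=
  ⟨1, 0, by simp, by simp, one_eq_Mup⟩

/-- Extraction: entries of the Sp(1,1) relation. -/
lemma cond_of_mem_Sp11 {a b : Quat} (h : !![a, -b; b, a] ∈ Sp11) :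
    normSq a - normSq b = 1 ∧ star a * b + star b * a = 0 := by
  have hx : star a * a = ((normSq a : ℝ) : Quat) := Quaternion.star_mul_self a
  have hy : star b * b = ((normSq b : ℝ) : Quat) := Quaternion.star_mul_self b
  have H : !![a, -b; b, a]ᴴ * eta2 * !![a, -b; b, a] = eta2 := h
  rw [eta2_eq] at H
  constructor
  · have h11 := congrArg (fun M => (M 1 1).re) H
    simp [Matrix.mul_apply, Fin.sum_univ_two, Matrix.conjTranspose_apply, hx, hy] at h11
    linarith
  · have h01 := congrArg (fun M => M 0 1) H
    simpa [Matrix.mul_apply, Fin.sum_univ_two, Matrix.conjTranspose_apply] using h01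

/-- The general (0,0)-entry relation for members of Sp(1,1). -/
lemma entry00_of_mem_Sp11 {A : Matrix (Fin 2) (Fin 2) Quat} (h : A ∈ Sp11) :
    normSq (A 1 0) - normSq (A 0 0) = -1 := by
  have H : Aᴴ * eta2 * A = eta2 := h
  rw [eta2_eq] at H
  have h00 := congrArg (fun M => (M 0 0).re) H
  have hx : star (A 0 0) * A 0 0 = ((normSq (A 0 0) : ℝ) : Quat) :=
    Quaternion.star_mul_self _
  have hy : star (A 1 0) * A 1 0 = ((normSq (A 1 0) : ℝ) : Quat) :=
    Quaternion.star_mul_self _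
  simp [Matrix.mul_apply, Fin.sum_univ_two, Matrix.conjTranspose_apply, hx, hy] at h00
  linarith

/-- The separating continuous function. -/
def fsep (A : Matrix (Fin 2) (Fin 2) Quat) : ℝ :=
  (star (A 1 1) * A 0 0 - star (A 1 0) * A 0 1).re

lemma continuous_fsep : Continuous fsep := by
  unfold fsep
  apply Quaternion.continuous_re.comp
  have h : ∀ i j : Fin 2, Continuous fun A : Matrix (Fin 2) (Fin 2) Quat => A i j :=
    fun i j => (continuous_apply j).comp (continuous_apply i)
  exact (((h 1 1).star.mul (h 0 0)).sub ((h 1 0).star.mul (h 0 1)))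

lemma fsep_pos_form (a b : Quat) :
    fsep !![a, -b; 1 * b, 1 * a] = normSq a + normSq b := by
  have hx : star a * a = ((normSq a : ℝ) : Quat) := Quaternion.star_mul_self a
  have hy : star b * b = ((normSq b : ℝ) : Quat) := Quaternion.star_mul_self b
  simp [fsep, hx, hy]

lemma fsep_neg_form (a b : Quat) :
    fsep !![a, -b; (-1) * b, (-1) * a] = -(normSq a + normSq b) := by
  have hx : star a * a = ((normSq a : ℝ) : Quat) := Quaternion.star_mul_self a
  have hy : star b * b = ((normSq b : ℝ) : Quat) := Quaternion.star_mul_self b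
  simp [fsep, hx, hy]; ring

lemma one_mem_Ugrp : (1 : Matrix (Fin 2) (Fin 2) Quat) ∈ Ugrp :=
  Uplus_subset_Ugrp one_mem_Uplus

/-- Parametrization map. -/
def Pmap (p : Quat × Quat) : Matrix (Fin 2) (Fin 2) Quat := !![p.1, -p.2; p.2, p.1]

lemma continuous_Pmap : Continuous Pmap := by
  apply continuous_matrix
  intro i j
  fin_cases i <;> fin_cases j <;> simp [Pmap] <;> fun_prop

lemma Pmap_mem_Uplus {x y : Quat} (h1 : normSq x - normSq y = 1)
    (h2 : star x * y + star y * x = 0) : Pmap (x, y) ∈ Uplus :=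
  ⟨x, y, h1, h2, rfl⟩

lemma Pmap_one : Pmap (1, 0) = 1 := by
  rw [Pmap, one_eq_Mup]

lemma joined_aux {a b : Quat} (h1 : normSq a - normSq b = 1)
    (h2 : star a * b + star b * a = 0) :
    JoinedIn Uplus (!![a, -b; b, a]) 1 := by
  have hnb : (0:ℝ) ≤ normSq b := normSq_nonneg
  have hna : normSq a = 1 + normSq b := by linarith
  have hnapos : (0:ℝ) < normSq a := by linarith
  set s : ℝ → ℝ := fun t => Real.sqrt ((1 + (1 - t) ^ 2 * normSq b) / normSq a) with hs
  have hargnn : ∀ t : ℝ, 0 ≤ (1 + (1 - t) ^ 2 * normSq b) / normSq a := by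
    intro t
    apply div_nonneg _ hnapos.le
    positivity
  have hmem : ∀ t : ℝ, Pmap (s t • a, (1 - t) • b) ∈ Uplus := by
    intro t
    apply Pmap_mem_Uplus
    · rw [normSq_smul, normSq_smul, hs]
      rw [Real.sq_sqrt (hargnn t), div_mul_eq_mul_div, mul_div_assoc,
        div_self hnapos.ne', mul_one]
      ring
    · have key : star (s t • a) * ((1 - t) • b) + star ((1 - t) • b) * (s t • a)
          = (s t * (1 - t)) • (star a * b + star b * a) := by
        rw [Quaternion.star_smul, Quaternion.star_smul,
          smul_mul_assoc, smul_mul_assoc, mul_smul_comm, mul_smul_comm,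
          smul_smul, smul_smul, smul_add, mul_comm (1 - t) (s t)]
      rw [key, h2, smul_zero]
  -- endpoints
  have hs0 : s 0 = 1 := by
    rw [hs]
    simp only [sub_zero, one_pow, one_mul, ← hna]
    rw [div_self hnapos.ne', Real.sqrt_one]
  have hnorma : Real.sqrt (normSq a) = ‖a‖ := by
    rw [normSq_eq_norm_mul_self, Real.sqrt_mul_self (norm_nonneg a)]
  have hane : ‖a‖ ≠ 0 := by
    rw [← hnorma]
    positivity
  have hs1 : s 1 = ‖a‖⁻¹ := by
    rw [hs]
    norm_num
    exact hnorma
  set u : Quat := s 1 • a with hu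
  have hunorm : ‖u‖ = 1 := by
    rw [hu, norm_smul, hs1, Real.norm_eq_abs, abs_of_nonneg (by positivity),
      inv_mul_cancel₀ hane]
  -- the first path
  have j1 : JoinedIn Uplus (!![a, -b; b, a]) (Pmap (u, 0)) := by
    refine ⟨⟨⟨fun t => Pmap (s t • a, (1 - (t:ℝ)) • b), ?_⟩, ?_, ?_⟩, ?_⟩
    · apply continuous_Pmap.comp
      apply Continuous.prodMk
      · exact (Real.continuous_sqrt.comp (by fun_prop)).smul continuous_const
      · fun_prop
    · show Pmap (s 0 • a, (1 - (0:ℝ)) • b) = _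
      rw [hs0]
      norm_num [Pmap]
    · show Pmap (s 1 • a, (1 - (1:ℝ)) • b) = _
      rw [← hu]
      norm_num
    · intro t
      exact hmem t
  -- the sphere path
  have hrank : 1 < Module.rank ℝ Quat := by
    rw [Quaternion.rank_eq_four]
    norm_num
  have hsph : IsPathConnected (Metric.sphere (0 : Quat) 1) :=
    isPathConnected_sphere hrank 0 zero_le_one
  have humem : u ∈ Metric.sphere (0 : Quat) 1 := by
    simpa [mem_sphere_zero_iff_norm] using hunorm
  have h1mem : (1 : Quat) ∈ Metric.sphere (0 : Quat) 1 := by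
    simp [mem_sphere_zero_iff_norm]
  have jsph : JoinedIn (Metric.sphere (0 : Quat) 1) u 1 := hsph.joinedIn u humem 1 h1mem
  have j2 : JoinedIn Uplus (Pmap (u, 0)) 1 := by
    obtain ⟨γ, hγ⟩ := jsph
    have hg : Continuous fun q : Quat => Pmap (q, 0) :=
      continuous_Pmap.comp (continuous_id.prodMk continuous_const)
    refine ⟨(γ.map hg).cast rfl (by rw [Pmap_one]), ?_⟩
    intro t
    simp only [Path.cast_coe, Path.map_coe, Function.comp_apply]
    have hq : ‖γ t‖ = 1 := by simpa [mem_sphere_zero_iff_norm] using hγ t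
    apply Pmap_mem_Uplus
    · rw [normSq_eq_norm_mul_self, hq]
      simp
    · simp
  exact j1.trans j2

lemma isPathConnected_Uplus : IsPathConnected Uplus := by
  refine ⟨1, one_mem_Uplus, ?_⟩
  intro A hA
  obtain ⟨a, b, h1, h2, rfl⟩ := hA
  exact (joined_aux h1 h2).symm

lemma normSq_rel_of_form {a b ε : Quat} (hε : ε = 1 ∨ ε = -1)
    (h : !![a, -b; ε * b, ε * a] ∈ Sp11) : normSq a - normSq b = 1 := by
  have h00 := entry00_of_mem_Sp11 h
  have e1 : (!![a, -b; ε * b, ε * a] : Matrix (Fin 2) (Fin 2) Quat) 1 0 = ε * b := by simp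
  have e2 : (!![a, -b; ε * b, ε * a] : Matrix (Fin 2) (Fin 2) Quat) 0 0 = a := by simp
  rw [e1, e2] at h00
  have hn : normSq (ε * b) = normSq b := by
    rcases hε with rfl | rfl <;> simp
  rw [hn] at h00
  linarith

lemma comm_Phi_of_form (a b : Quat) :
    !![a, -b; b, a] * Phi = Phi * !![a, -b; b, a] := by
  refine Matrix.ext fun i j => ?_
  fin_cases i <;> fin_cases j <;>
    simp [Phi, Matrix.mul_apply, Fin.sum_univ_two]

lemma form_of_comm {A : Matrix (Fin 2) (Fin 2) Quat} (h : A * Phi = Phi * A) :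
    A = !![A 0 0, -(-(A 0 1)); -(A 0 1), A 0 0] := by
  have h00 := congrArg (fun M => M 0 0) h
  have h10 := congrArg (fun M => M 1 0) h
  simp only [Phi, Matrix.mul_apply, Fin.sum_univ_two] at h00 h10
  norm_num at h00 h10
  refine Matrix.ext fun i j => ?_
  fin_cases i <;> fin_cases j <;> simp
  · rw [h00, neg_neg]
  · exact h10

lemma fsep_one : fsep (1 : Matrix (Fin 2) (Fin 2) Quat) = 1 := by
  simp [fsep, Matrix.one_apply]

theorem identity_component_of_U_eq_centralizer_of_Phi :
    connectedComponentIn Ugrp 1 = {A ∈ Sp11 | A * Phi = Phi * A} := by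
  have hpre : IsPreconnected Uplus := isPathConnected_Uplus.isConnected.isPreconnected
  ext A
  constructor
  · intro hA
    obtain ⟨hSp, a, b, ε, hε, hform⟩ := connectedComponentIn_subset Ugrp 1 hA
    -- relation |a|² = 1 + |b|² for both signs
    have hrel : normSq a - normSq b = 1 := normSq_rel_of_form hε (hform ▸ hSp)
    rcases hε with rfl | rfl
    · simp only [one_mul] at hform
      subst hform
      refine ⟨hSp, comm_Phi_of_form a b⟩
    · exfalso
      have hC : IsPreconnected (connectedComponentIn Ugrp 1) := isPreconnected_connectedComponentIn
      have hopen1 : IsOpen (fsep ⁻¹' Set.Ioi 0) := isOpen_Ioi.preimage continuous_fsep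
      have hopen2 : IsOpen (fsep ⁻¹' Set.Iio 0) := isOpen_Iio.preimage continuous_fsep
      have hsub : connectedComponentIn Ugrp 1 ⊆ fsep ⁻¹' Set.Ioi 0 ∪ fsep ⁻¹' Set.Iio 0 := by
        intro B hB
        obtain ⟨hBSp, a', b', ε', hε', rfl⟩ := connectedComponentIn_subset Ugrp 1 hB
        have hrel' : normSq a' - normSq b' = 1 := normSq_rel_of_form hε' hBSp
        have hb'nn : (0:ℝ) ≤ normSq b' := normSq_nonneg
        rcases hε' with rfl | rfl
        · left
          show fsep _ ∈ Set.Ioi 0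
          rw [fsep_pos_form]
          simp only [Set.mem_Ioi]
          linarith
        · right
          show fsep _ ∈ Set.Iio 0
          rw [fsep_neg_form]
          simp only [Set.mem_Iio]
          linarith
      have hne1 : (connectedComponentIn Ugrp 1 ∩ fsep ⁻¹' Set.Ioi 0).Nonempty := by
        refine ⟨1, mem_connectedComponentIn one_mem_Ugrp, ?_⟩
        simp [Set.mem_preimage, fsep_one]
      have hne2 : (connectedComponentIn Ugrp 1 ∩ fsep ⁻¹' Set.Iio 0).Nonempty := by
        refine ⟨_, hform ▸ hA, ?_⟩
        show fsep !![a, -b; (-1) * b, (-1) * a] ∈ Set.Iio 0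
        rw [fsep_neg_form]
        have hb'nn : (0:ℝ) ≤ normSq b := normSq_nonneg
        simp only [Set.mem_Iio]
        linarith
      obtain ⟨B, _, hBu, hBv⟩ := hC _ _ hopen1 hopen2 hsub hne1 hne2
      have h1 : (0:ℝ) < fsep B := hBu
      have h2 : fsep B < 0 := hBv
      linarith
  · rintro ⟨hSp, hcomm⟩
    have hform := form_of_comm hcomm
    have hmem : A ∈ Uplus := by
      have hSp' : !![A 0 0, -(-(A 0 1)); -(A 0 1), A 0 0] ∈ Sp11 := hform ▸ hSp
      obtain ⟨c1, c2⟩ := cond_of_mem_Sp11 hSp'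
      exact ⟨A 0 0, -(A 0 1), c1, c2, hform⟩
    exact hpre.subset_connectedComponentIn one_mem_Uplus Uplus_subset_Ugrp hmem
end
end

section
/- The real Lie algebra 𝔲 := {X ∈ Mat₂(ℍ) : Xᴴ η + η X = 0 and XΦ = ΦX} (with η = diag(-1,1) and bracket the matrix commutator) is isomorphic, as a real Lie algebra, to 𝔰𝔬(1,3) := {Y ∈ Mat₄(ℝ) : Yᵀ η₄ + η₄ Y = 0} with η₄ = diag(-1,1,1,1) and bracket the matrix commutator. -/
open Quaternion Matrix

noncomputable section

/-- The Lie algebra 𝔲 ⊂ Mat₂(ℍ), as a set. -/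
def uSet : Set (Matrix (Fin 2) (Fin 2) Quat) :=
  {X | Xᴴ * eta2 + eta2 * X = 0 ∧ X * Phi = Phi * X}

/-- The matrix η₄ = diag(-1,1,1,1). -/
def eta4 : Matrix (Fin 4) (Fin 4) ℝ := Matrix.diagonal ![-1, 1, 1, 1]

/-- The Lie algebra 𝔰𝔬(1,3) ⊂ Mat₄(ℝ), as a set. -/
def so13Set : Set (Matrix (Fin 4) (Fin 4) ℝ) :=
  {Y | Yᵀ * eta4 + eta4 * Y = 0}

/-!
A matrix commutes with `Φ` iff it has the form `a + cΦ = !![a, -c; c, a]`, and such a matrix is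
`η`-skew-Hermitian iff `a` and `c` are pure quaternions. Since `Φ` commutes with every quaternion
scalar and `Φ² = -1`,
`⁅a + cΦ, b + dΦ⁆ = (⁅a, b⁆ - ⁅c, d⁆) + (⁅a, d⁆ + ⁅c, b⁆)Φ`.
Sending `a + cΦ` to the infinitesimal rotation about `Im a` plus the infinitesimal boost along
`Im c` (both doubled, because `⁅a, b⁆ = 2 a × b` for pure quaternions) identifies this with the
relations `⁅R, R⁆ = R`, `⁅R, B⁆ = B`, `⁅B, B⁆ = -R` of `𝔰𝔬(1,3)`.
-/

def uMat {R : Type*} [Neg R] (a c : R) : Matrix (Fin 2) (Fin 2) R := !![a, -c; c, a]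

theorem mul_Phi_eq_Phi_mul_iff (X : Matrix (Fin 2) (Fin 2) Quat) :
    X * Phi = Phi * X ↔ uMat (X 0 0) (X 1 0) = X := by
  rw [← Matrix.ext_iff, ← Matrix.ext_iff]
  simp only [Phi, uMat, Matrix.mul_apply, Fin.sum_univ_two, Fin.forall_fin_two, of_apply, cons_val',
    cons_val_zero, cons_val_one, cons_val_fin_one, mul_zero, mul_one, zero_add, add_zero, mul_neg,
    zero_mul, neg_mul, one_mul, neg_inj]
  grind

theorem star_add_self_eq_zero_iff {R : Type*} [CommRing R] [NoZeroDivisors R] [CharZero R]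
    {a : ℍ[R]} : star a + a = 0 ↔ a.re = 0 :=
  add_eq_zero_iff_eq_neg.trans Quaternion.star_eq_neg

theorem uMat_mem_uSet_iff {a c : Quat} : uMat a c ∈ uSet ↔ a.re = 0 ∧ c.re = 0 := by
  have hskew : (uMat a c)ᴴ * eta2 + eta2 * uMat a c =
      !![-(star a + a), star c + c; star c + c, star a + a] := by
    ext i j : 1
    fin_cases i <;> fin_cases j <;> simp [uMat, eta2, Matrix.mul_apply, add_comm]
  have hPhi : uMat a c * Phi = Phi * uMat a c := (mul_Phi_eq_Phi_mul_iff _).2 rfl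
  simp only [uSet, Set.mem_ofPred_eq, hskew, hPhi, and_true, ← Matrix.ext_iff, Fin.forall_fin_two,
    of_apply, cons_val', cons_val_zero, cons_val_one, cons_val_fin_one, Matrix.zero_apply,
    neg_eq_zero, star_add_self_eq_zero_iff]
  tauto

theorem uSet_eq_image2 : uSet = Set.image2 uMat {a | a.re = 0} {c | c.re = 0} := by
  refine Set.Subset.antisymm (fun X hX => ?_) ?_
  · have hX_eq := (mul_Phi_eq_Phi_mul_iff X).1 hX.2
    obtain ⟨ha, hc⟩ := uMat_mem_uSet_iff.1 (hX_eq ▸ hX)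
    exact ⟨_, ha, _, hc, hX_eq⟩
  · rintro _ ⟨a, ha, c, hc, rfl⟩
    exact uMat_mem_uSet_iff.2 ⟨ha, hc⟩

theorem uMat_commutator {R : Type*} [Ring R] (a b c d : R) :
    uMat a c * uMat b d - uMat b d * uMat a c =
      uMat (a * b - b * a - (c * d - d * c)) (a * d - d * a + (c * b - b * c)) := by
  simp only [uMat, Matrix.mul_fin_two]
  ext i j : 1
  fin_cases i <;> fin_cases j <;> simp <;> noncomm_ring

def so13Mat {R : Type*} [CommRing R] (a c : ℍ[R]) : Matrix (Fin 4) (Fin 4) R :=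
  2 • !![0, c.imI, c.imJ, c.imK;
         c.imI, 0, -a.imK, a.imJ;
         c.imJ, a.imK, 0, -a.imI;
         c.imK, -a.imJ, a.imI, 0]

theorem so13Mat_mem_so13Set (a c : Quat) : so13Mat a c ∈ so13Set := by
  ext i j
  fin_cases i <;> fin_cases j <;> simp [so13Mat, eta4, Matrix.mul_apply, Fin.sum_univ_four]

theorem so13Set_eq_image2 : so13Set = Set.image2 so13Mat {a | a.re = 0} {c | c.re = 0} := by
  refine Set.Subset.antisymm (fun Y hY => ?_) ?_
  · refine ⟨⟨0, -(Y 2 3) / 2, Y 1 3 / 2, -(Y 1 2) / 2⟩, rfl,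
      ⟨0, Y 0 1 / 2, Y 0 2 / 2, Y 0 3 / 2⟩, rfl, ?_⟩
    ext i j
    have hij := congr_fun₂ hY i j
    fin_cases i <;> fin_cases j <;>
      simp [so13Mat, eta4, Matrix.mul_apply, Fin.sum_univ_four] at hij ⊢ <;> linarith
  · rintro _ ⟨a, -, c, -, rfl⟩
    exact so13Mat_mem_so13Set a c

theorem so13Mat_inj_of_re_eq_zero {a c a' c' : Quat} (ha : a.re = 0) (hc : c.re = 0)
    (ha' : a'.re = 0) (hc' : c'.re = 0) (h : so13Mat a c = so13Mat a' c') : a = a' ∧ c = c' :=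
  ⟨Quaternion.ext _ _ (ha.trans ha'.symm) (by simpa [so13Mat] using congr_fun₂ h 3 2)
      (by simpa [so13Mat] using congr_fun₂ h 1 3) (by simpa [so13Mat] using congr_fun₂ h 2 1),
    Quaternion.ext _ _ (hc.trans hc'.symm) (by simpa [so13Mat] using congr_fun₂ h 0 1)
      (by simpa [so13Mat] using congr_fun₂ h 0 2) (by simpa [so13Mat] using congr_fun₂ h 0 3)⟩

theorem so13Mat_commutator {R : Type*} [CommRing R] (a b c d : ℍ[R]) :
    so13Mat a c * so13Mat b d - so13Mat b d * so13Mat a c =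
      so13Mat (a * b - b * a - (c * d - d * c)) (a * d - d * a + (c * b - b * c)) := by
  ext i j
  fin_cases i <;> fin_cases j <;>
    simp only [so13Mat, Matrix.sub_apply, Matrix.mul_apply, Fin.sum_univ_four, Matrix.smul_apply,
      of_apply, cons_val_zero, cons_val_one, cons_val_two, cons_val_three, head_cons, tail_cons,
      Fin.isValue, Fin.zero_eta, Fin.mk_one, Fin.reduceFinMk, imI_mul, imJ_mul, imK_mul, imI_sub,
      imJ_sub, imK_sub, imI_add, imJ_add, imK_add] <;> ring

def uToSo13 : Matrix (Fin 2) (Fin 2) Quat →ₗ[ℝ] Matrix (Fin 4) (Fin 4) ℝ where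
  toFun X := so13Mat (X 0 0) (X 1 0)
  map_add' X Y := by
    ext i j
    fin_cases i <;> fin_cases j <;> simp [so13Mat] <;> ring
  map_smul' r X := by
    ext i j
    fin_cases i <;> fin_cases j <;> simp [so13Mat] <;> ring

theorem uToSo13_uMat (a c : Quat) : uToSo13 (uMat a c) = so13Mat a c := rfl

/-- There is an ℝ-linear map from Mat₂(ℍ) to Mat₄(ℝ) restricting to a bijection
from 𝔲 onto 𝔰𝔬(1,3) which intertwines the commutator brackets; i.e. the real Lie
algebras 𝔲 and 𝔰𝔬(1,3) are isomorphic. -/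
theorem u_isomorphic_so13 :
    ∃ f : Matrix (Fin 2) (Fin 2) Quat →ₗ[ℝ] Matrix (Fin 4) (Fin 4) ℝ,
      Set.BijOn f uSet so13Set ∧
      ∀ X ∈ uSet, ∀ Y ∈ uSet, f (X * Y - Y * X) = f X * f Y - f Y * f X := by
  rw [uSet_eq_image2, so13Set_eq_image2]
  refine ⟨uToSo13, ⟨?_, ?_, ?_⟩, ?_⟩
  · rintro _ ⟨a, ha, c, hc, rfl⟩
    exact ⟨a, ha, c, hc, rfl⟩
  · rintro _ ⟨a, ha, c, hc, rfl⟩ _ ⟨a', ha', c', hc', rfl⟩ h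
    obtain ⟨rfl, rfl⟩ := so13Mat_inj_of_re_eq_zero ha hc ha' hc' h
    rfl
  · rintro _ ⟨a, ha, c, hc, rfl⟩
    exact ⟨uMat a c, ⟨a, ha, c, hc, rfl⟩, rfl⟩
  · rintro _ ⟨a, -, c, -, rfl⟩ _ ⟨b, -, d, -, rfl⟩
    simp only [uMat_commutator, uToSo13_uMat, so13Mat_commutator]
end
end

section
/- The map σ ↦ ω_σ, where ω_σ is the alternating trilinear form on ℝ³ ⊗ ℝ⁴ determined on pure tensors by ω_σ(x₁ ⊗ q₁, x₂ ⊗ q₂, x₃ ⊗ q₃) := det(x₁|x₂|x₃)·σ(q₁, q₂, q₃), is an ℝ-linear bijection from the space of symmetric trilinear forms σ on ℝ⁴ onto the space of SO⁰(1,2)-invariant alternating trilinear forms on ℝ³ ⊗ ℝ⁴ (those ω with ω(g·u₁, g·u₂, g·u₃) = ω(u₁, u₂, u₃) for all g ∈ SO⁰(1,2)). -/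
/- Statement 12: SO⁰(1,2)-invariant alternating 3-forms on ℝ³ ⊗ ℝ⁴ correspond to
symmetric trilinear forms on ℝ⁴. -/

open Matrix TensorProduct

noncomputable section

/-- The real matrix η₃ = diag(-1,1,1). -/
def eta3 : Matrix (Fin 3) (Fin 3) ℝ := Matrix.diagonal ![-1, 1, 1]

/-- SO⁰(1,2): the identity component of {g : gᵀ η₃ g = η₃}. -/
def SOo12 : Set (Matrix (Fin 3) (Fin 3) ℝ) :=
  connectedComponentIn {g : Matrix (Fin 3) (Fin 3) ℝ | gᵀ * eta3 * g = eta3} 1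

/-- The determinant of the 3×3 matrix with columns x₁, x₂, x₃. -/
def colDet (x₁ x₂ x₃ : Fin 3 → ℝ) : ℝ :=
  (Matrix.of fun i j => ![x₁, x₂, x₃] j i).det

/-- ℝ³ ⊗ ℝ⁴ as a real vector space. -/
abbrev T34 := TensorProduct ℝ (Fin 3 → ℝ) (Fin 4 → ℝ)

/-- A trilinear form on ℝ⁴ is symmetric. -/
def IsSymm3 (σ : (Fin 4 → ℝ) →ₗ[ℝ] (Fin 4 → ℝ) →ₗ[ℝ] (Fin 4 → ℝ) →ₗ[ℝ] ℝ) : Prop :=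
  ∀ a b c : Fin 4 → ℝ, σ a b c = σ b a c ∧ σ a b c = σ a c b

/-- The defining relation: ω is determined on pure tensors by
ω(x₁⊗q₁, x₂⊗q₂, x₃⊗q₃) = det(x₁|x₂|x₃)·σ(q₁,q₂,q₃). -/
def RelOmega (σ : (Fin 4 → ℝ) →ₗ[ℝ] (Fin 4 → ℝ) →ₗ[ℝ] (Fin 4 → ℝ) →ₗ[ℝ] ℝ)
    (ω : AlternatingMap ℝ T34 ℝ (Fin 3)) : Prop :=
  ∀ (x₁ x₂ x₃ : Fin 3 → ℝ) (q₁ q₂ q₃ : Fin 4 → ℝ),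
    ω ![x₁ ⊗ₜ[ℝ] q₁, x₂ ⊗ₜ[ℝ] q₂, x₃ ⊗ₜ[ℝ] q₃] = colDet x₁ x₂ x₃ * σ q₁ q₂ q₃

/-- ω is SO⁰(1,2)-invariant, for the action g·(x ⊗ q) = (gx) ⊗ q. -/
def IsInvOmega (ω : AlternatingMap ℝ T34 ℝ (Fin 3)) : Prop :=
  ∀ g ∈ SOo12, ∀ u : Fin 3 → T34,
    ω (fun i => TensorProduct.map g.mulVecLin LinearMap.id (u i)) = ω u

/-!
Fix `q₁ q₂ q₃ ∈ ℝ⁴`. For an invariant `ω`, the map `(x₁, x₂, x₃) ↦ ω(x₁ ⊗ q₁, x₂ ⊗ q₂, x₃ ⊗ q₃)` is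
an `SO⁰(1,2)`-invariant trilinear form on `ℝ³`, and invariance under a single quarter turn and a
single boost already forces such a form to be a multiple of the determinant. So `ω = det ⊗ σ`
with `σ(q₁, q₂, q₃) = ω(e₀ ⊗ q₁, e₁ ⊗ q₂, e₂ ⊗ q₃)`, and `σ` is symmetric because `ω` and `det`
are both alternating. Conversely, for symmetric `σ` the form `det ⊗ σ` is alternating, and it is
invariant because `det` is `±1` on `O(1,2)`, hence constant `1` on the connected set `SO⁰(1,2)`.
-/

namespace AlternatingMap

variable {R M N : Type*} [CommRing R] [AddCommGroup M] [Module R M] [AddCommGroup N] [Module R N]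

def curry₃ (f : M [⋀^Fin 3]→ₗ[R] N) : M →ₗ[R] M →ₗ[R] M →ₗ[R] N :=
  (curryLeftLinearMap.compr₂
    (curryLeftLinearMap.compr₂ (constLinearEquivOfIsEmpty (ι := Fin 0)).symm.toLinearMap)) ∘ₗ
    f.curryLeft

@[simp]
theorem curry₃_apply (f : M [⋀^Fin 3]→ₗ[R] N) (x y z : M) : f.curry₃ x y z = f ![x, y, z] := by
  simp [curry₃]

theorem map_vec₃_swap₀₁ (f : M [⋀^Fin 3]→ₗ[R] N) (x y z : M) : f ![y, x, z] = -f ![x, y, z] := by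
  rw [← f.map_swap ![x, y, z] (i := 0) (j := 1) (by decide)]
  congr 1
  ext i
  fin_cases i <;> rfl

theorem map_vec₃_swap₁₂ (f : M [⋀^Fin 3]→ₗ[R] N) (x y z : M) : f ![x, z, y] = -f ![x, y, z] := by
  rw [← f.map_swap ![x, y, z] (i := 1) (j := 2) (by decide)]
  congr 1
  ext i
  fin_cases i <;> rfl

theorem ext_tmul {ι P : Type*} [Finite ι] [AddCommGroup P] [Module R P] [Module.Free R M]
    [Module.Free R N] {f g : (M ⊗[R] N) [⋀^ι]→ₗ[R] P}
    (h : ∀ (x : ι → M) (q : ι → N), f (fun i => x i ⊗ₜ q i) = g (fun i => x i ⊗ₜ q i)) :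
    f = g := by
  let b := (Module.Free.chooseBasis R M).tensorProduct (Module.Free.chooseBasis R N)
  refine coe_multilinearMap_injective (Module.Basis.ext_multilinear (fun _ => b) fun v => ?_)
  simpa [b, Module.Basis.tensorProduct_apply'] using h _ _

end AlternatingMap

namespace LinearMap

variable {R M N P Q : Type*} [CommRing R] [AddCommGroup M] [Module R M] [AddCommGroup N]
  [Module R N] [AddCommGroup P] [Module R P] [AddCommGroup Q] [Module R Q]

def toAlternatingMap₃ (f : M →ₗ[R] M →ₗ[R] M →ₗ[R] N) (h₀₁ : ∀ x z, f x x z = 0)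
    (h₁₂ : ∀ x y, f x y y = 0) : M [⋀^Fin 3]→ₗ[R] N where
  toFun v := f (v 0) (v 1) (v 2)
  map_update_add' := by
    intro _ v i x y
    obtain rfl : ‹DecidableEq (Fin 3)› = instDecidableEqFin 3 := Subsingleton.elim _ _
    fin_cases i <;> simp [Function.update_of_ne]
  map_update_smul' := by
    intro _ v i c x
    obtain rfl : ‹DecidableEq (Fin 3)› = instDecidableEqFin 3 := Subsingleton.elim _ _
    fin_cases i <;> simp [Function.update_of_ne]
  map_eq_zero_of_eq' v i j hv hij := by
    have h₀₂ (x y : M) : f x y x = 0 := by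
      simpa [h₀₁, h₁₂] using h₁₂ x (x + y)
    fin_cases i <;> fin_cases j <;> simp_all

@[simp]
theorem toAlternatingMap₃_apply (f : M →ₗ[R] M →ₗ[R] M →ₗ[R] N) (h₀₁ h₁₂) (v : Fin 3 → M) :
    toAlternatingMap₃ f h₀₁ h₁₂ v = f (v 0) (v 1) (v 2) :=
  rfl

def compl₁₂₃ (f : M →ₗ[R] M →ₗ[R] M →ₗ[R] N) (g₁ g₂ g₃ : Q →ₗ[R] M) :
    Q →ₗ[R] Q →ₗ[R] Q →ₗ[R] N :=
  (f.compl₁₂ g₁ g₂).compr₂ (lcomp R N g₃)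

@[simp]
theorem compl₁₂₃_apply (f : M →ₗ[R] M →ₗ[R] M →ₗ[R] N) (g₁ g₂ g₃ : Q →ₗ[R] M) (x y z : Q) :
    f.compl₁₂₃ g₁ g₂ g₃ x y z = f (g₁ x) (g₂ y) (g₃ z) :=
  rfl

def tmul₃ (B : M →ₗ[R] M →ₗ[R] M →ₗ[R] R) (C : N →ₗ[R] N →ₗ[R] N →ₗ[R] R) :
    M ⊗[R] N →ₗ[R] M ⊗[R] N →ₗ[R] M ⊗[R] N →ₗ[R] R :=
  BilinForm.tensorDistrib R R ∘ₗ TensorProduct.map B C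

@[simp]
theorem tmul₃_tmul (B : M →ₗ[R] M →ₗ[R] M →ₗ[R] R) (C : N →ₗ[R] N →ₗ[R] N →ₗ[R] R)
    (x y z : M) (q r s : N) : tmul₃ B C (x ⊗ₜ q) (y ⊗ₜ r) (z ⊗ₜ s) = B x y z * C q r s := by
  simp [tmul₃, mul_comm]

theorem ext_tmul₃ {f g : M ⊗[R] N →ₗ[R] M ⊗[R] N →ₗ[R] M ⊗[R] N →ₗ[R] P}
    (h : ∀ x y z q r s, f (x ⊗ₜ q) (y ⊗ₜ r) (z ⊗ₜ s) = g (x ⊗ₜ q) (y ⊗ₜ r) (z ⊗ₜ s)) : f = g :=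
  TensorProduct.ext' fun x q => TensorProduct.ext' fun y r => TensorProduct.ext' fun z s =>
    h x y z q r s

theorem tmul₃_swap₀₁ {B : M →ₗ[R] M →ₗ[R] M →ₗ[R] R} {C : N →ₗ[R] N →ₗ[R] N →ₗ[R] R}
    (hB : ∀ x y z, B y x z = -B x y z) (hC : ∀ q r s, C r q s = C q r s)
    (u v w : M ⊗[R] N) : tmul₃ B C v u w = -tmul₃ B C u v w := by
  have : (tmul₃ B C).flip + tmul₃ B C = 0 := ext_tmul₃ fun x y z q r s => by
    simp only [add_apply, flip_apply, tmul₃_tmul, zero_apply]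
    rw [hB, hC]
    ring
  exact eq_neg_of_add_eq_zero_left congr($this u v w)

theorem tmul₃_swap₁₂ {B : M →ₗ[R] M →ₗ[R] M →ₗ[R] R} {C : N →ₗ[R] N →ₗ[R] N →ₗ[R] R}
    (hB : ∀ x y z, B x z y = -B x y z) (hC : ∀ q r s, C q s r = C q r s)
    (u v w : M ⊗[R] N) : tmul₃ B C u w v = -tmul₃ B C u v w := by
  have : lflip.toLinearMap ∘ₗ tmul₃ B C + tmul₃ B C = 0 :=
    ext_tmul₃ fun x y z q r s => by
      simp only [add_apply, coe_comp, LinearEquiv.coe_coe, Function.comp_apply, lflip_apply,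
        flip_apply, tmul₃_tmul, zero_apply]
      rw [hB, hC]
      ring
  exact eq_neg_of_add_eq_zero_left congr($this u v w)

theorem pi_apply₃_eq_sum_univ {ι : Type*} [Fintype ι] [DecidableEq ι]
    (f : (ι → R) →ₗ[R] (ι → R) →ₗ[R] (ι → R) →ₗ[R] N) (x y z : ι → R) :
    f x y z = ∑ i, ∑ j, ∑ k,
      (x i * y j * z k) • f (Pi.single i 1) (Pi.single j 1) (Pi.single k 1) := by
  conv_lhs => rw [pi_eq_sum_univ' x]
  simp only [map_sum, map_smul, sum_apply, smul_apply]
  conv_lhs => rw [pi_eq_sum_univ' y]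
  simp only [map_sum, map_smul, sum_apply, smul_apply]
  conv_lhs => rw [pi_eq_sum_univ' z]
  simp only [map_sum, map_smul, Finset.smul_sum, smul_smul, mul_assoc]

end LinearMap

section Lorentz

open Real

abbrev lorentzGroup : Set (Matrix (Fin 3) (Fin 3) ℝ) := {g | gᵀ * eta3 * g = eta3}

theorem det_eq_one_or_neg_one_of_mem_lorentzGroup {g : Matrix (Fin 3) (Fin 3) ℝ}
    (hg : g ∈ lorentzGroup) : g.det = 1 ∨ g.det = -1 := by
  have h := congrArg det hg
  rw [det_mul, det_mul, det_transpose] at h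
  have : eta3.det = -1 := by simp [eta3, Fin.prod_univ_three]
  exact mul_self_eq_one_iff.mp (by nlinarith)

theorem det_eq_one_of_mem_SOo12 {g : Matrix (Fin 3) (Fin 3) ℝ} (hg : g ∈ SOo12) : g.det = 1 := by
  have hsub : SOo12 ⊆ lorentzGroup := connectedComponentIn_subset _ _
  refine (det_eq_one_or_neg_one_of_mem_lorentzGroup (hsub hg)).resolve_right fun h => ?_
  -- otherwise `det` would take the value `0` on the connected set `SOo12`, between `g` and `1`
  obtain ⟨m, hm, hm0⟩ := isPreconnected_connectedComponentIn.intermediate_value₂ (g := fun _ => 0)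
    hg (mem_connectedComponentIn (by simp)) (continuous_id.matrix_det).continuousOn
    continuousOn_const (by simp [h]) (by simp)
  rcases det_eq_one_or_neg_one_of_mem_lorentzGroup (hsub hm) with h' | h' <;> simp_all

theorem mem_SOo12_of_path (γ : ℝ → Matrix (Fin 3) (Fin 3) ℝ) (hγ : Continuous γ) (h0 : γ 0 = 1)
    (hγL : ∀ t, γ t ∈ lorentzGroup) (t : ℝ) : γ t ∈ SOo12 :=
  (isPreconnected_range hγ).subset_connectedComponentIn ⟨0, h0⟩ (Set.range_subset_iff.2 hγL)
    ⟨t, rfl⟩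

def spatialRotation (θ : ℝ) : Matrix (Fin 3) (Fin 3) ℝ :=
  !![1, 0, 0; 0, cos θ, -sin θ; 0, sin θ, cos θ]

def boost (t : ℝ) : Matrix (Fin 3) (Fin 3) ℝ :=
  !![cosh t, sinh t, 0; sinh t, cosh t, 0; 0, 0, 1]

theorem spatialRotation_mem_SOo12 (θ : ℝ) : spatialRotation θ ∈ SOo12 := by
  refine mem_SOo12_of_path spatialRotation (by unfold spatialRotation; fun_prop)
    (by simp [spatialRotation, one_fin_three]) (fun θ => ?_) θ
  ext i j
  fin_cases i <;> fin_cases j <;> simp [spatialRotation, eta3, mul_apply, Fin.sum_univ_three] <;>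
    nlinarith [sin_sq_add_cos_sq θ]

theorem boost_mem_SOo12 (t : ℝ) : boost t ∈ SOo12 := by
  refine mem_SOo12_of_path boost (by unfold boost; fun_prop) (by simp [boost, one_fin_three])
    (fun t => ?_) t
  ext i j
  fin_cases i <;> fin_cases j <;> simp [boost, eta3, mul_apply, Fin.sum_univ_three] <;>
    nlinarith [cosh_sq_sub_sinh_sq t]

end Lorentz

theorem colDet_eq_det (x y z : Fin 3 → ℝ) : colDet x y z = (Matrix.of ![x, y, z]).det := by
  rw [colDet, ← det_transpose]
  rfl

theorem colDet_mulVec (g : Matrix (Fin 3) (Fin 3) ℝ) (x y z : Fin 3 → ℝ) :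
    colDet (g *ᵥ x) (g *ᵥ y) (g *ᵥ z) = g.det * colDet x y z := by
  have : (Matrix.of fun i j => ![g *ᵥ x, g *ᵥ y, g *ᵥ z] j i)
      = g * Matrix.of fun i j => ![x, y, z] j i := by
    ext i j
    fin_cases j <;> simp [Matrix.mul_apply, Matrix.mulVec, dotProduct]
  rw [colDet, this, det_mul, colDet]

theorem colDet_single : colDet (Pi.single 0 1) (Pi.single 1 1) (Pi.single 2 1) = 1 := by
  simp [colDet, det_fin_three]

def detForm : (Fin 3 → ℝ) →ₗ[ℝ] (Fin 3 → ℝ) →ₗ[ℝ] (Fin 3 → ℝ) →ₗ[ℝ] ℝ :=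
  (detRowAlternating (n := Fin 3) (R := ℝ)).curry₃

@[simp]
theorem detForm_apply (x y z : Fin 3 → ℝ) : detForm x y z = colDet x y z := by
  rw [colDet_eq_det]
  rfl

theorem detForm_swap₀₁ (x y z : Fin 3 → ℝ) : detForm y x z = -detForm x y z := by
  rw [detForm, AlternatingMap.curry₃_apply, AlternatingMap.curry₃_apply,
    AlternatingMap.map_vec₃_swap₀₁]

theorem detForm_swap₁₂ (x y z : Fin 3 → ℝ) : detForm x z y = -detForm x y z := by
  rw [detForm, AlternatingMap.curry₃_apply, AlternatingMap.curry₃_apply,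
    AlternatingMap.map_vec₃_swap₁₂]

open Real in
theorem eq_colDet_mul_of_invariant_tensor (T : Fin 3 → Fin 3 → Fin 3 → ℝ)
    (hT : ∀ g ∈ SOo12, ∀ i j k, ∑ a, ∑ b, ∑ c, g a i * g b j * g c k * T a b c = T i j k)
    (i j k : Fin 3) :
    T i j k = colDet (Pi.single i 1) (Pi.single j 1) (Pi.single k 1) * T 0 1 2 := by
  -- Invariance under the quarter turn and the boost with `(cosh t, sinh t) = (5/4, 3/4)` alone is
  -- a linear system on the 27 entries whose solutions are the multiples of the Levi-Civita symbol.
  have hR := hT _ (spatialRotation_mem_SOo12 (π / 2))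
  have hB := hT _ (boost_mem_SOo12 (log 2))
  simp only [Fin.forall_fin_succ, IsEmpty.forall_iff, and_true, Fin.sum_univ_three] at hR hB
  simp only [spatialRotation, boost, cos_pi_div_two, sin_pi_div_two, cosh_log two_pos,
    sinh_log two_pos, of_apply, cons_val', cons_val_zero, cons_val_one, cons_val, cons_val_fin_one,
    Fin.isValue, Fin.succ_zero_eq_one, Fin.succ_one_eq_two] at hR hB
  norm_num at hR hB
  casesm* _ ∧ _
  fin_cases i <;> fin_cases j <;> fin_cases k <;>
    simp only [colDet, det_fin_three, of_apply, cons_val', cons_val_zero, cons_val_one, cons_val,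
      cons_val_fin_one, Pi.single_eq_same, Pi.single_eq_of_ne, ne_eq, Fin.reduceEq, Fin.isValue,
      Fin.reduceFinMk, Fin.mk_one, Fin.zero_eta, not_false_eq_true, zero_ne_one, one_ne_zero] <;>
    grind

theorem eq_colDet_mul_of_invariant
    (τ : (Fin 3 → ℝ) →ₗ[ℝ] (Fin 3 → ℝ) →ₗ[ℝ] (Fin 3 → ℝ) →ₗ[ℝ] ℝ)
    (hτ : ∀ g ∈ SOo12, ∀ x y z, τ (g *ᵥ x) (g *ᵥ y) (g *ᵥ z) = τ x y z) (x y z : Fin 3 → ℝ) :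
    τ x y z = colDet x y z * τ (Pi.single 0 1) (Pi.single 1 1) (Pi.single 2 1) := by
  have hT := eq_colDet_mul_of_invariant_tensor
    (fun i j k => τ (Pi.single i 1) (Pi.single j 1) (Pi.single k 1)) fun g hg i j k => by
      rw [← hτ g hg, τ.pi_apply₃_eq_sum_univ]
      simp
  rw [τ.pi_apply₃_eq_sum_univ, ← detForm_apply, detForm.pi_apply₃_eq_sum_univ]
  simp only [Finset.sum_mul]
  refine Fintype.sum_congr _ _ fun i => Fintype.sum_congr _ _ fun j =>
    Fintype.sum_congr _ _ fun k => ?_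
  rw [hT i j k, detForm_apply, smul_eq_mul, smul_eq_mul]
  ring

theorem Matrix.map_vec₃ {α β : Type*} (f : α → β) (a b c : α) :
    (fun i => f (![a, b, c] i)) = ![f a, f b, f c] := by
  ext i
  fin_cases i <;> rfl

section Correspondence

variable {σ σ' : (Fin 4 → ℝ) →ₗ[ℝ] (Fin 4 → ℝ) →ₗ[ℝ] (Fin 4 → ℝ) →ₗ[ℝ] ℝ}
  {ω ω' : AlternatingMap ℝ T34 ℝ (Fin 3)}

theorem RelOmega.apply_tmul (h : RelOmega σ ω) (x : Fin 3 → Fin 3 → ℝ) (q : Fin 3 → Fin 4 → ℝ) :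
    ω (fun i => x i ⊗ₜ q i) = colDet (x 0) (x 1) (x 2) * σ (q 0) (q 1) (q 2) := by
  rw [← h]
  congr 1
  ext i
  fin_cases i <;> rfl

theorem RelOmega.unique (h : RelOmega σ ω) (h' : RelOmega σ ω') : ω = ω' :=
  AlternatingMap.ext_tmul fun x q => by rw [h.apply_tmul, h'.apply_tmul]

theorem RelOmega.left_unique (h : RelOmega σ ω) (h' : RelOmega σ' ω) : σ = σ' := by
  refine LinearMap.ext fun q => LinearMap.ext fun r => LinearMap.ext fun s => ?_
  have := (h _ _ _ q r s).symm.trans (h' (Pi.single 0 1) (Pi.single 1 1) (Pi.single 2 1) q r s)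
  rwa [colDet_single, one_mul, one_mul] at this

theorem RelOmega.isSymm3 (h : RelOmega σ ω) : IsSymm3 σ := by
  intro q r s
  have h₀₁ := ω.map_vec₃_swap₀₁ (Pi.single 0 1 ⊗ₜ q) (Pi.single 1 1 ⊗ₜ r) (Pi.single 2 1 ⊗ₜ s)
  have h₁₂ := ω.map_vec₃_swap₁₂ (Pi.single 0 1 ⊗ₜ q) (Pi.single 1 1 ⊗ₜ r) (Pi.single 2 1 ⊗ₜ s)
  rw [h, h, ← detForm_apply, detForm_swap₀₁, detForm_apply, colDet_single] at h₀₁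
  rw [h, h, ← detForm_apply, detForm_swap₁₂, detForm_apply, colDet_single] at h₁₂
  constructor <;> linarith

theorem RelOmega.add (h : RelOmega σ ω) (h' : RelOmega σ' ω') : RelOmega (σ + σ') (ω + ω') := by
  intro x y z q r s
  simp only [AlternatingMap.add_apply, LinearMap.add_apply, h x y z q r s, h' x y z q r s]
  ring

theorem RelOmega.smul (c : ℝ) (h : RelOmega σ ω) : RelOmega (c • σ) (c • ω) := by
  intro x y z q r s
  simp only [AlternatingMap.smul_apply, LinearMap.smul_apply, smul_eq_mul, h x y z q r s]
  ring

theorem RelOmega.isInvOmega (h : RelOmega σ ω) : IsInvOmega ω := by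
  intro g hg u
  have hg' : RelOmega σ (ω.compLinearMap (TensorProduct.map g.mulVecLin LinearMap.id)) := by
    intro x y z q r s
    rw [AlternatingMap.compLinearMap_apply, Matrix.map_vec₃]
    simp only [TensorProduct.map_tmul, mulVecLin_apply, LinearMap.id_apply]
    rw [h, colDet_mulVec, det_eq_one_of_mem_SOo12 hg, one_mul]
  exact congr($(hg'.unique h) u)

def IsSymm3.omega (hσ : IsSymm3 σ) : AlternatingMap ℝ T34 ℝ (Fin 3) :=
  (detForm.tmul₃ σ).toAlternatingMap₃
    (fun u w => by
      have := LinearMap.tmul₃_swap₀₁ detForm_swap₀₁ (fun q r s => ((hσ q r s).1).symm) u u w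
      linarith)
    (fun u v => by
      have := LinearMap.tmul₃_swap₁₂ detForm_swap₁₂ (fun q r s => ((hσ q r s).2).symm) u v v
      linarith)

theorem IsSymm3.relOmega_omega (hσ : IsSymm3 σ) : RelOmega σ hσ.omega := by
  intro x y z q r s
  simp [IsSymm3.omega]

def sliceForm (ω : AlternatingMap ℝ T34 ℝ (Fin 3)) :
    (Fin 4 → ℝ) →ₗ[ℝ] (Fin 4 → ℝ) →ₗ[ℝ] (Fin 4 → ℝ) →ₗ[ℝ] ℝ :=
  ω.curry₃.compl₁₂₃ (TensorProduct.mk ℝ _ _ (Pi.single 0 1))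
    (TensorProduct.mk ℝ _ _ (Pi.single 1 1)) (TensorProduct.mk ℝ _ _ (Pi.single 2 1))

theorem IsInvOmega.map_vec₃_mulVec (hω : IsInvOmega ω) {g : Matrix (Fin 3) (Fin 3) ℝ}
    (hg : g ∈ SOo12) (x y z : Fin 3 → ℝ) (q r s : Fin 4 → ℝ) :
    ω ![(g *ᵥ x) ⊗ₜ q, (g *ᵥ y) ⊗ₜ r, (g *ᵥ z) ⊗ₜ s] = ω ![x ⊗ₜ q, y ⊗ₜ r, z ⊗ₜ s] := by
  rw [← hω g hg ![x ⊗ₜ q, y ⊗ₜ r, z ⊗ₜ s], Matrix.map_vec₃]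
  simp

theorem IsInvOmega.relOmega_sliceForm (hω : IsInvOmega ω) : RelOmega (sliceForm ω) ω := by
  intro x y z q r s
  let τ := ω.curry₃.compl₁₂₃ ((TensorProduct.mk ℝ _ _).flip q) ((TensorProduct.mk ℝ _ _).flip r)
    ((TensorProduct.mk ℝ _ _).flip s)
  have hτ : ∀ g ∈ SOo12, ∀ x y z, τ (g *ᵥ x) (g *ᵥ y) (g *ᵥ z) = τ x y z := fun g hg x y z => by
    simpa [τ] using hω.map_vec₃_mulVec hg x y z q r s
  simpa [τ, sliceForm] using eq_colDet_mul_of_invariant τ hτ x y z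

end Correspondence

/-- σ ↦ ω_σ is an ℝ-linear bijection from symmetric trilinear forms on ℝ⁴ onto
SO⁰(1,2)-invariant alternating trilinear forms on ℝ³ ⊗ ℝ⁴. -/
theorem symmetric_trilinear_equiv_invariant_alternating :
    -- ω_σ is well defined (exists and is unique) for every symmetric σ …
    (∀ σ, IsSymm3 σ → ∃! ω : AlternatingMap ℝ T34 ℝ (Fin 3), RelOmega σ ω) ∧
    -- … and is SO⁰(1,2)-invariant,
    (∀ σ, IsSymm3 σ → ∀ ω, RelOmega σ ω → IsInvOmega ω) ∧
    -- the correspondence is ℝ-linear,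
    (∀ σ σ' ω ω', RelOmega σ ω → RelOmega σ' ω' → RelOmega (σ + σ') (ω + ω')) ∧
    (∀ (c : ℝ) σ ω, RelOmega σ ω → RelOmega (c • σ) (c • ω)) ∧
    -- and it is onto the invariant alternating forms, with a unique symmetric preimage.
    (∀ ω, IsInvOmega ω → ∃! σ, IsSymm3 σ ∧ RelOmega σ ω) :=
  ⟨fun _ hσ => ⟨hσ.omega, hσ.relOmega_omega, fun _ h => h.unique hσ.relOmega_omega⟩,
    fun _ _ _ h => h.isInvOmega,
    fun _ _ _ _ h h' => h.add h',
    fun c _ _ h => h.smul c,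
    fun ω hω => ⟨sliceForm ω, ⟨hω.relOmega_sliceForm.isSymm3, hω.relOmega_sliceForm⟩,
      fun _ h => h.2.left_unique hω.relOmega_sliceForm⟩⟩
end
end
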